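/- arXiv:2403.09938 — 2 statements merged into one kernel-verified Lean document; each statement's English description precedes it below -/
import Mathlib

section
/- The maps row : M^row_{m,n} → W_m and col : M^col_{m,n} → W_n, defined on vertices by M ↦ row(M) and M ↦ col(M) respectively, are local isomorphisms of pre-crystal graphs. -/
namespace FilteredRSK

/-! ## Words and crystal operators (via parenthesis matching) -/

/-- Scan the word `w`, treating each letter `i` as a `)` and each letter `i+1` as a `(`,
matching parentheses in the usual way.  Returns the pair consisting of the list of positions
of unmatched `)` (rightmost first) and the stack of positions of unmatched `(`
(most recent first, so the leftmost unmatched `(` is the last entry). -/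
def bracketScan (i : ℕ) (w : List ℕ) : List ℕ × List ℕ :=
  ((List.range w.length).zip w).foldl
    (fun (st : List ℕ × List ℕ) (p : ℕ × ℕ) =>
      if p.2 = i + 1 then (st.1, p.1 :: st.2)
      else if p.2 = i then
        match st.2 with
        | [] => (p.1 :: st.1, [])
        | _ :: rest => (st.1, rest)
      else st)
    ([], [])

/-- Position of the rightmost unmatched `)` of `bracket_i(w)`, if any. -/
def fPos (i : ℕ) (w : List ℕ) : Option ℕ := (bracketScan i w).1.head?

/-- Position of the leftmost unmatched `(` of `bracket_i(w)`, if any. -/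
def ePos (i : ℕ) (w : List ℕ) : Option ℕ := (bracketScan i w).2.getLast?

/-- The crystal lowering operator `f_i`: change the letter `i` at the rightmost unmatched `)`
to `i+1`; output `∅` (i.e. `none`) if there is no unmatched `)`. -/
def fWord (i : ℕ) (w : List ℕ) : Option (List ℕ) := (fPos i w).map fun p => w.set p (i + 1)

/-- The crystal raising operator `e_i`: change the letter `i+1` at the leftmost unmatched `(`
to `i`; output `∅` (i.e. `none`) if there is no unmatched `(`. -/
def eWord (i : ℕ) (w : List ℕ) : Option (List ℕ) := (ePos i w).map fun p => w.set p i

/-! ## Tableaux -/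

/-- A tableau is a list of rows (top to bottom).  Its column reading word reads each column
bottom-to-top, columns left to right. -/
def readingWord (T : List (List ℕ)) : List ℕ :=
  (List.range (T.headD []).length).flatMap fun j => (T.filterMap fun row => row[j]?).reverse

/-- Semistandardness: all rows nonempty, rows weakly increase, row lengths weakly decrease,
and columns strictly increase. -/
def IsSSYT (T : List (List ℕ)) : Prop :=
  (∀ row ∈ T, row ≠ []) ∧
  (∀ row ∈ T, row.Chain' (· ≤ ·)) ∧
  T.Chain' (fun row row' => row'.length ≤ row.length ∧
    ∀ j < row'.length, row.getD j 0 < row'.getD j 0)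

/-- All entries of the tableau `T` lie in the interval `[a, b]`. -/
def entriesIn (T : List (List ℕ)) (a b : ℕ) : Prop := ∀ row ∈ T, ∀ x ∈ row, a ≤ x ∧ x ≤ b

/-- The shape of a tableau: the list of its row lengths. -/
def shape (T : List (List ℕ)) : List ℕ := T.map List.length

/-- A partition: a weakly decreasing list of positive integers. -/
def IsPartition (lam : List ℕ) : Prop :=
  lam.Chain' (fun x y => y ≤ x) ∧ ∀ x ∈ lam, 0 < x

/-- Row insertion of `x` into a single row: replace the first entry strictly larger than `x`
(and bump it out), or append `x` at the end. -/
def insertRow (row : List ℕ) (x : ℕ) : List ℕ × Option ℕ :=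
  match row.findIdx? (fun y => decide (x < y)) with
  | none => (row ++ [x], none)
  | some k => (row.set k x, row[k]?)

/-- Row insertion of a letter into a tableau. -/
def insertTab : List (List ℕ) → ℕ → List (List ℕ)
  | [], x => [[x]]
  | row :: rest, x =>
    match insertRow row x with
    | (row', none) => row' :: rest
    | (row', some y) => row' :: insertTab rest y

/-- The insertion tableau of a word, obtained by successive row insertion of its letters. -/
def tabOf (w : List ℕ) : List (List ℕ) := w.foldl insertTab []

/-- The highest-weight tableau of shape `lam` with entries from `[a, b]`:
row `i` (0-indexed) is constantly filled with `a + i`. -/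
def highestTab (lam : List ℕ) (a : ℕ) : List (List ℕ) :=
  lam.mapIdx fun i len => List.replicate len (a + i)

/-! ## Knuth equivalence -/

/-- Elementary Knuth moves. -/
inductive KnuthStep : List ℕ → List ℕ → Prop
  | yzx (u v : List ℕ) (x y z : ℕ) (h1 : x < y) (h2 : y ≤ z) :
      KnuthStep (u ++ y :: z :: x :: v) (u ++ y :: x :: z :: v)
  | zxy (u v : List ℕ) (x y z : ℕ) (h1 : x ≤ y) (h2 : y < z) :
      KnuthStep (u ++ z :: x :: y :: v) (u ++ x :: z :: y :: v)

/-- Knuth equivalence: the equivalence relation generated by elementary Knuth moves. -/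
def KnuthEquiv : List ℕ → List ℕ → Prop := Relation.EqvGen KnuthStep

/-- The Knuth equivalence class of a word. -/
def KClass (w : List ℕ) : Set (List ℕ) := {v | KnuthEquiv w v}

open Classical in
/-- A representative of a (nonempty) set of words. -/
noncomputable def classRep (C : Set (List ℕ)) : List ℕ :=
  if h : C.Nonempty then h.some else []

/-- The weight of a Knuth class, defined via a representative. -/
noncomputable def classWt (C : Set (List ℕ)) : Multiset ℕ := ↑(classRep C)

/-- The insertion tableau of a Knuth class (as the reading word of the tableau),
defined via a representative. -/
noncomputable def classTab (C : Set (List ℕ)) : List ℕ := readingWord (tabOf (classRep C))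

/-! ## Pre-crystal graphs -/

/-- A pre-crystal graph: a directed graph with edge labels in `L` and
vertex weights in `W`, together with a distinguished set of vertices. -/
structure PCG (V : Type*) (L : Type*) (W : Type*) where
  verts : Set V
  wt : V → W
  E : L → V → V → Prop

namespace PCG

variable {V V' L L' W W' : Type*}

/-- Underlying undirected adjacency between vertices. -/
def Adj (G : PCG V L W) (u v : V) : Prop :=
  u ∈ G.verts ∧ v ∈ G.verts ∧ ∃ l, G.E l u v ∨ G.E l v u

/-- `u` and `v` lie in the same connected component. -/
def Reach (G : PCG V L W) : V → V → Prop := Relation.ReflTransGen G.Adj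

/-- The connected component of `v` in `G`, as a pre-crystal graph. -/
def comp (G : PCG V L W) (v : V) : PCG V L W where
  verts := {u | u ∈ G.verts ∧ G.Reach v u}
  wt := G.wt
  E := G.E

/-- A pre-crystal graph homomorphism (with weights translated along `ω`):
a vertex map preserving weights and labelled edges. -/
def IsHomVia (G : PCG V L W) (H : PCG V' L W') (ω : W → W') (f : V → V') : Prop :=
  (∀ v ∈ G.verts, f v ∈ H.verts) ∧
  (∀ v ∈ G.verts, H.wt (f v) = ω (G.wt v)) ∧
  (∀ (l : L), ∀ u ∈ G.verts, ∀ v ∈ G.verts, G.E l u v → H.E l (f u) (f v))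

/-- A local isomorphism of pre-crystal graphs: a homomorphism whose restriction to each
connected component of `G` is an isomorphism onto a connected component of `H`. -/
def IsLocalIsoVia (G : PCG V L W) (H : PCG V' L W') (ω : W → W') (f : V → V') : Prop :=
  IsHomVia G H ω f ∧
  (∀ u ∈ G.verts, ∀ v ∈ G.verts, G.Reach u v → f u = f v → u = v) ∧
  (∀ u ∈ G.verts, ∀ v' ∈ H.verts, H.Reach (f u) v' → ∃ v ∈ G.verts, G.Reach u v ∧ f v = v') ∧
  (∀ (l : L), ∀ u ∈ G.verts, ∀ v ∈ G.verts, G.Reach u v → H.E l (f u) (f v) → G.E l u v)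

/-- An isomorphism of pre-crystal graphs. -/
def IsIsoVia (G : PCG V L W) (H : PCG V' L W') (ω : W → W') (f : V → V') : Prop :=
  IsHomVia G H ω f ∧ Set.BijOn f G.verts H.verts ∧
  (∀ (l : L), ∀ u ∈ G.verts, ∀ v ∈ G.verts, H.E l (f u) (f v) → G.E l u v)

/-- Two pre-crystal graphs are isomorphic (with weights identified along `ω`). -/
def IsomorphicVia (G : PCG V L W) (H : PCG V' L W') (ω : W → W') : Prop :=
  ∃ f, IsIsoVia G H ω f

/-- The Cartesian product of two pre-crystal graphs; edge labels form the disjoint union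
of the two label sets, and weights are concatenated. -/
def prod (G : PCG V L W) (H : PCG V' L' W') : PCG (V × V') (L ⊕ L') (W × W') where
  verts := {p | p.1 ∈ G.verts ∧ p.2 ∈ H.verts}
  wt := fun p => (G.wt p.1, H.wt p.2)
  E := fun l p q =>
    match l with
    | Sum.inl a => G.E a p.1 q.1 ∧ p.2 = q.2
    | Sum.inr b => H.E b p.2 q.2 ∧ p.1 = q.1

/-- The Cartesian product of a finite family of pre-crystal graphs sharing a common ambient
label set (with disjoint effective labels, as for crystals of words on disjoint intervals):
an edge labelled `l` acts in a single coordinate and fixes all others. -/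
def pi {r : ℕ} (G : Fin r → PCG V L W) : PCG (Fin r → V) L (Fin r → W) where
  verts := {p | ∀ k, p k ∈ (G k).verts}
  wt := fun p k => (G k).wt (p k)
  E := fun l p q => ∃ k, (G k).E l (p k) (q k) ∧ ∀ k', k' ≠ k → p k' = q k'

end PCG

/-! ## Word, tableau and Knuth crystal graphs -/

/-- The word crystal graph `W_{[a,b]}`: vertices are the words on the alphabet `[a,b]`,
the weight of a word is its multiset of letters (recording the number of occurrences of
each letter), and there is an edge `w →ᵢ v` iff `v = f_i(w)` (for `a ≤ i < b`). -/
def WordGraph (a b : ℕ) : PCG (List ℕ) ℕ (Multiset ℕ) where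
  verts := {w | ∀ x ∈ w, a ≤ x ∧ x ≤ b}
  wt := fun w => ↑w
  E := fun i u v => a ≤ i ∧ i < b ∧ fWord i u = some v

/-- The disjoint union `⊕_λ B_{λ,[a,b]}` of all tableau crystal graphs with entries in
`[a,b]`: the induced subgraph of `W_{[a,b]}` on reading words of semistandard tableaux. -/
def TabWordGraph (a b : ℕ) : PCG (List ℕ) ℕ (Multiset ℕ) where
  verts := {w | ∃ T, IsSSYT T ∧ entriesIn T a b ∧ readingWord T = w}
  wt := fun w => ↑w
  E := fun i u v => a ≤ i ∧ i < b ∧ fWord i u = some v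

/-- The tableau crystal graph `B_{λ,[a,b]}`: the induced subgraph of `W_{[a,b]}` on the
reading words of semistandard tableaux of shape `λ` with entries in `[a,b]`. -/
def BGraph (lam : List ℕ) (a b : ℕ) : PCG (List ℕ) ℕ (Multiset ℕ) where
  verts := {w | ∃ T, IsSSYT T ∧ shape T = lam ∧ entriesIn T a b ∧ readingWord T = w}
  wt := fun w => ↑w
  E := fun i u v => a ≤ i ∧ i < b ∧ fWord i u = some v

/-- The Knuth crystal graph `K_{[a,b]}`: vertices are Knuth equivalence classes of words on
`[a,b]`, weights via representatives, with an edge `C →ᵢ C'` iff some representatives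
`w ∈ C`, `w' ∈ C'` satisfy `w' = f_i(w)`. -/
noncomputable def KnuthGraph (a b : ℕ) : PCG (Set (List ℕ)) ℕ (Multiset ℕ) where
  verts := {C | ∃ w, (∀ x ∈ w, a ≤ x ∧ x ≤ b) ∧ C = KClass w}
  wt := classWt
  E := fun i C C' => ∃ w ∈ C, ∃ w' ∈ C', a ≤ i ∧ i < b ∧ fWord i w = some w'

/-! ## Filtrations -/

/-- `ι` enumerates a filtration `0 = i₀ < i₁ < ⋯ < i_r = m` of `[0, m]`. -/
def IsFiltration (m : ℕ) {r : ℕ} (ι : Fin (r + 1) → ℕ) : Prop :=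
  StrictMono ι ∧ ι 0 = 0 ∧ ι (Fin.last r) = m

/-- The subword of `w` consisting of all letters in the interval `[lo + 1, hi]`. -/
def blockFilter (lo hi : ℕ) (w : List ℕ) : List ℕ :=
  w.filter fun x => decide (lo + 1 ≤ x ∧ x ≤ hi)

/-- The `I`-filtration of a word: the tuple of subwords on the letter intervals
`[i_{k-1}+1, i_k]`. -/
def filterWord {r : ℕ} (ι : Fin (r + 1) → ℕ) (w : List ℕ) : Fin r → List ℕ :=
  fun k => blockFilter (ι k.castSucc) (ι k.succ) w

/-- The canonical splitting of a weight (a multiset of letters) along the intervals of a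
filtration. -/
def splitWt {r : ℕ} (ι : Fin (r + 1) → ℕ) (s : Multiset ℕ) : Fin r → Multiset ℕ :=
  fun k => s.filter fun x => ι k.castSucc + 1 ≤ x ∧ x ≤ ι k.succ

/-- The `I`-filtered word crystal graph `W^I_m`: the subgraph of `W_m = W_{[1,m]}` obtained
by deleting all edges labelled by elements of `I`. -/
def FilteredWordGraph (m : ℕ) (I : Set ℕ) : PCG (List ℕ) ℕ (Multiset ℕ) where
  verts := {w | ∀ x ∈ w, 1 ≤ x ∧ x ≤ m}
  wt := fun w => ↑w
  E := fun i u v => i ∉ I ∧ 1 ≤ i ∧ i < m ∧ fWord i u = some v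

/-- The `I`-filtered Knuth crystal graph `K^I_m`: the quotient of `W^I_m` by Knuth
equivalence. -/
noncomputable def FilteredKnuthGraph (m : ℕ) (I : Set ℕ) :
    PCG (Set (List ℕ)) ℕ (Multiset ℕ) where
  verts := {C | ∃ w, (∀ x ∈ w, 1 ≤ x ∧ x ≤ m) ∧ C = KClass w}
  wt := classWt
  E := fun i C C' => i ∉ I ∧ ∃ w ∈ C, ∃ w' ∈ C', 1 ≤ i ∧ i < m ∧ fWord i w = some w'

/-- The product `W_{[1,i₁]} □ W_{[i₁+1,i₂]} □ ⋯ □ W_{[i_{r-1}+1,m]}`. -/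
def WordPiGraph {r : ℕ} (ι : Fin (r + 1) → ℕ) :
    PCG (Fin r → List ℕ) ℕ (Fin r → Multiset ℕ) :=
  PCG.pi fun k => WordGraph (ι k.castSucc + 1) (ι k.succ)

/-- The product `K_{[1,i₁]} □ K_{[i₁+1,i₂]} □ ⋯ □ K_{[i_{r-1}+1,m]}`. -/
noncomputable def KnuthPiGraph {r : ℕ} (ι : Fin (r + 1) → ℕ) :
    PCG (Fin r → Set (List ℕ)) ℕ (Fin r → Multiset ℕ) :=
  PCG.pi fun k => KnuthGraph (ι k.castSucc + 1) (ι k.succ)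

/-- The disjoint union, over all `I`-filtered partition-tuples `λ`, of the filtered tableau
crystal graphs `B_{λ,m} = B_{λ⁽¹⁾,[1,i₁]} □ ⋯ □ B_{λ⁽ʳ⁾,[i_{r-1}+1,m]}`. -/
def TabPiGraph {r : ℕ} (ι : Fin (r + 1) → ℕ) :
    PCG (Fin r → List ℕ) ℕ (Fin r → Multiset ℕ) :=
  PCG.pi fun k => TabWordGraph (ι k.castSucc + 1) (ι k.succ)

/-- The `I`-filtered tableau crystal graph `B_{λ,m}` of shape-tuple `λ`. -/
def BPiGraph {r : ℕ} (ι : Fin (r + 1) → ℕ) (lam : Fin r → List ℕ) :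
    PCG (Fin r → List ℕ) ℕ (Fin r → Multiset ℕ) :=
  PCG.pi fun k => BGraph (lam k) (ι k.castSucc + 1) (ι k.succ)

/-- The map on Knuth classes induced by the `I`-filtration (via a representative). -/
noncomputable def classFilter {r : ℕ} (ι : Fin (r + 1) → ℕ) (C : Set (List ℕ)) :
    Fin r → Set (List ℕ) :=
  fun k => KClass (filterWord ι (classRep C) k)

/-- An `I`-filtered partition-tuple: each `λ⁽ᵏ⁾` is a partition with at most
`i_k - i_{k-1}` rows. -/
def IsFilteredShape {r : ℕ} (ι : Fin (r + 1) → ℕ) (lam : Fin r → List ℕ) : Prop :=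
  ∀ k, IsPartition (lam k) ∧ (lam k).length ≤ ι k.succ - ι k.castSucc

/-- The highest-weight tableau-tuple of shape-tuple `λ`: its `k`-th component is the
highest-weight tableau of shape `λ⁽ᵏ⁾` with entries from `[i_{k-1}+1, i_k]`. -/
def highestTabs {r : ℕ} (ι : Fin (r + 1) → ℕ) (lam : Fin r → List ℕ) :
    Fin r → List (List ℕ) :=
  fun k => highestTab (lam k) (ι k.castSucc + 1)

/-! ## Matrices, row/column words and bicrystal operators -/

/-- The row word of a nonnegative integer matrix: record `M i j` copies of the (1-based) row
index `i + 1` for each entry, reading columns top-to-bottom, left to right. -/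
def rowWord {m n : ℕ} (M : Matrix (Fin m) (Fin n) ℕ) : List ℕ :=
  (List.finRange n).flatMap fun j => (List.finRange m).flatMap fun i =>
    List.replicate (M i j) ((i : ℕ) + 1)

/-- The column word: record `M i j` copies of the (1-based) column index `j + 1` for each
entry, reading rows left-to-right, top to bottom. -/
def colWord {m n : ℕ} (M : Matrix (Fin m) (Fin n) ℕ) : List ℕ :=
  (List.finRange m).flatMap fun i => (List.finRange n).flatMap fun j =>
    List.replicate (M i j) ((j : ℕ) + 1)

/-- The list of matrix cells producing the successive letters of `rowWord M`. -/
def rowCells {m n : ℕ} (M : Matrix (Fin m) (Fin n) ℕ) : List (Fin m × Fin n) :=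
  (List.finRange n).flatMap fun j => (List.finRange m).flatMap fun i =>
    List.replicate (M i j) (i, j)

/-- The list of matrix cells producing the successive letters of `colWord M`. -/
def colCells {m n : ℕ} (M : Matrix (Fin m) (Fin n) ℕ) : List (Fin m × Fin n) :=
  (List.finRange m).flatMap fun i => (List.finRange n).flatMap fun j =>
    List.replicate (M i j) (i, j)

/-- Subtract `1` at the cell `c` and add `1` at the cell directly below. -/
def shiftDown {m n : ℕ} (M : Matrix (Fin m) (Fin n) ℕ) (c : Fin m × Fin n) :
    Matrix (Fin m) (Fin n) ℕ := fun a b =>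
  if a = c.1 ∧ b = c.2 then M a b - 1
  else if (a : ℕ) = (c.1 : ℕ) + 1 ∧ b = c.2 then M a b + 1
  else M a b

/-- Subtract `1` at the cell `c` and add `1` at the cell directly above. -/
def shiftUp {m n : ℕ} (M : Matrix (Fin m) (Fin n) ℕ) (c : Fin m × Fin n) :
    Matrix (Fin m) (Fin n) ℕ := fun a b =>
  if a = c.1 ∧ b = c.2 then M a b - 1
  else if (a : ℕ) + 1 = (c.1 : ℕ) ∧ b = c.2 then M a b + 1
  else M a b

/-- Subtract `1` at the cell `c` and add `1` at the cell directly to the right. -/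
def shiftRight {m n : ℕ} (M : Matrix (Fin m) (Fin n) ℕ) (c : Fin m × Fin n) :
    Matrix (Fin m) (Fin n) ℕ := fun a b =>
  if a = c.1 ∧ b = c.2 then M a b - 1
  else if a = c.1 ∧ (b : ℕ) = (c.2 : ℕ) + 1 then M a b + 1
  else M a b

/-- Subtract `1` at the cell `c` and add `1` at the cell directly to the left. -/
def shiftLeft {m n : ℕ} (M : Matrix (Fin m) (Fin n) ℕ) (c : Fin m × Fin n) :
    Matrix (Fin m) (Fin n) ℕ := fun a b =>
  if a = c.1 ∧ b = c.2 then M a b - 1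
  else if a = c.1 ∧ (b : ℕ) + 1 = (c.2 : ℕ) then M a b + 1
  else M a b

/-- The row bicrystal lowering operator `f_i^row`, transporting `f_i` through `rowWord`. -/
def fRow {m n : ℕ} (i : ℕ) (M : Matrix (Fin m) (Fin n) ℕ) :
    Option (Matrix (Fin m) (Fin n) ℕ) :=
  (fPos i (rowWord M)).bind fun p => ((rowCells M)[p]?).map fun c => shiftDown M c

/-- The row bicrystal raising operator `e_i^row`, transporting `e_i` through `rowWord`. -/
def eRow {m n : ℕ} (i : ℕ) (M : Matrix (Fin m) (Fin n) ℕ) :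
    Option (Matrix (Fin m) (Fin n) ℕ) :=
  (ePos i (rowWord M)).bind fun p => ((rowCells M)[p]?).map fun c => shiftUp M c

/-- The column bicrystal lowering operator `f_j^col`, transporting `f_j` through `colWord`. -/
def fCol {m n : ℕ} (j : ℕ) (M : Matrix (Fin m) (Fin n) ℕ) :
    Option (Matrix (Fin m) (Fin n) ℕ) :=
  (fPos j (colWord M)).bind fun p => ((colCells M)[p]?).map fun c => shiftRight M c

/-- The column bicrystal raising operator `e_j^col`, transporting `e_j` through `colWord`. -/
def eCol {m n : ℕ} (j : ℕ) (M : Matrix (Fin m) (Fin n) ℕ) :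
    Option (Matrix (Fin m) (Fin n) ℕ) :=
  (ePos j (colWord M)).bind fun p => ((colCells M)[p]?).map fun c => shiftLeft M c

/-- The pre-crystal graph `M^row_{m,n}`: vertices are all matrices in `Mat_{m,n}(ℤ≥0)`,
weights are row-sums (the weight of the row word), edges `M →ᵢ f_i^row(M)`. -/
def MRowGraph (m n : ℕ) : PCG (Matrix (Fin m) (Fin n) ℕ) ℕ (Multiset ℕ) where
  verts := Set.univ
  wt := fun M => ↑(rowWord M)
  E := fun i M M' => 1 ≤ i ∧ i < m ∧ fRow i M = some M'

/-- The pre-crystal graph `M^col_{m,n}`. -/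
def MColGraph (m n : ℕ) : PCG (Matrix (Fin m) (Fin n) ℕ) ℕ (Multiset ℕ) where
  verts := Set.univ
  wt := fun M => ↑(colWord M)
  E := fun j M M' => 1 ≤ j ∧ j < n ∧ fCol j M = some M'

/-- The matrix bicrystal graph `M_{m,n}`, with edges labelled `i^row` (`Sum.inl i`) and
`j^col` (`Sum.inr j`), and weight the pair (row-sum tuple, column-sum tuple). -/
def MatGraph (m n : ℕ) :
    PCG (Matrix (Fin m) (Fin n) ℕ) (ℕ ⊕ ℕ) (Multiset ℕ × Multiset ℕ) where
  verts := Set.univ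
  wt := fun M => (↑(rowWord M), ↑(colWord M))
  E := fun l M M' =>
    match l with
    | Sum.inl i => 1 ≤ i ∧ i < m ∧ fRow i M = some M'
    | Sum.inr j => 1 ≤ j ∧ j < n ∧ fCol j M = some M'

/-- The `(I|J)`-filtered matrix bicrystal graph `M^{I|J}_{m,n}`: delete the edges labelled
`i^row` with `i ∈ I` and `j^col` with `j ∈ J`. -/
def FilteredMatGraph (m n : ℕ) (I J : Set ℕ) :
    PCG (Matrix (Fin m) (Fin n) ℕ) (ℕ ⊕ ℕ) (Multiset ℕ × Multiset ℕ) where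
  verts := Set.univ
  wt := fun M => (↑(rowWord M), ↑(colWord M))
  E := fun l M M' =>
    match l with
    | Sum.inl i => i ∉ I ∧ 1 ≤ i ∧ i < m ∧ fRow i M = some M'
    | Sum.inr j => j ∉ J ∧ 1 ≤ j ∧ j < n ∧ fCol j M = some M'

/-- `filterRSK_{I|J}` at the level of reading words: apply the insertion tableau map to each
component of the filtrations of the row and column words, recording reading words. -/
def filterRSKw {m n r s : ℕ} (ι : Fin (r + 1) → ℕ) (κ : Fin (s + 1) → ℕ)
    (M : Matrix (Fin m) (Fin n) ℕ) : (Fin r → List ℕ) × (Fin s → List ℕ) :=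
  (fun k => readingWord (tabOf (filterWord ι (rowWord M) k)),
   fun k => readingWord (tabOf (filterWord κ (colWord M) k)))

/-- `filterRSK_{I|J}` at the level of tableaux. -/
def filterRSKt {m n r s : ℕ} (ι : Fin (r + 1) → ℕ) (κ : Fin (s + 1) → ℕ)
    (M : Matrix (Fin m) (Fin n) ℕ) :
    (Fin r → List (List ℕ)) × (Fin s → List (List ℕ)) :=
  (fun k => tabOf (filterWord ι (rowWord M) k),
   fun k => tabOf (filterWord κ (colWord M) k))

/-- A matrix is a highest-weight vertex of `M^{I|J}_{m,n}`:
`e_i^row(M) = ∅` for all `i ∉ I` and `e_j^col(M) = ∅` for all `j ∉ J`. -/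
def MatHighest {m n : ℕ} (I J : Set ℕ) (M : Matrix (Fin m) (Fin n) ℕ) : Prop :=
  (∀ i, 1 ≤ i → i < m → i ∉ I → eRow i M = none) ∧
  (∀ j, 1 ≤ j → j < n → j ∉ J → eCol j M = none)

/-- A set of matrices is `(I|J)`-bicrystal closed if it is closed under the bicrystal
operators `e_i^row, f_i^row` (`i ∉ I`) and `e_j^col, f_j^col` (`j ∉ J`). -/
def BicrystalClosed {m n : ℕ} (I J : Set ℕ) (S : Set (Matrix (Fin m) (Fin n) ℕ)) : Prop :=
  ∀ M ∈ S,
    (∀ i, 1 ≤ i → i < m → i ∉ I →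
      (∀ N, fRow i M = some N → N ∈ S) ∧ (∀ N, eRow i M = some N → N ∈ S)) ∧
    (∀ j, 1 ≤ j → j < n → j ∉ J →
      (∀ N, fCol j M = some N → N ∈ S) ∧ (∀ N, eCol j M = some N → N ∈ S))

/-- The induced pre-crystal subgraph of `M^{I|J}_{m,n}` on a set `S` of matrices. -/
def inducedMatGraph (m n : ℕ) (I J : Set ℕ) (S : Set (Matrix (Fin m) (Fin n) ℕ)) :
    PCG (Matrix (Fin m) (Fin n) ℕ) (ℕ ⊕ ℕ) (Multiset ℕ × Multiset ℕ) where
  verts := S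
  wt := fun M => (↑(rowWord M), ↑(colWord M))
  E := (FilteredMatGraph m n I J).E

/-- The disjoint union, over the highest-weight matrices `M₀ ∈ S` (hence with multiplicity
`c_{λ|μ}` for each filtered partition-tuple `(λ|μ)`), of copies of `B_{λ,m} □ B_{μ,n}` where
`(λ|μ)` is the shape of `filterRSK_{I|J}(M₀)`. -/
def sumCopiesGraph {m n : ℕ} {r s : ℕ} (ι : Fin (r + 1) → ℕ) (κ : Fin (s + 1) → ℕ)
    (S : Set (Matrix (Fin m) (Fin n) ℕ)) :
    PCG (Matrix (Fin m) (Fin n) ℕ × ((Fin r → List ℕ) × (Fin s → List ℕ))) (ℕ ⊕ ℕ)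
      ((Fin r → Multiset ℕ) × (Fin s → Multiset ℕ)) where
  verts := {Mp | Mp.1 ∈ S ∧ MatHighest (Set.range ι) (Set.range κ) Mp.1 ∧
    ∃ lam mu, IsFilteredShape ι lam ∧ IsFilteredShape κ mu ∧
      filterRSKt ι κ Mp.1 = (highestTabs ι lam, highestTabs κ mu) ∧
      Mp.2 ∈ (PCG.prod (BPiGraph ι lam) (BPiGraph κ mu)).verts}
  wt := fun Mp => (PCG.prod (TabPiGraph ι) (TabPiGraph κ)).wt Mp.2
  E := fun l Mp Mq =>
    Mp.1 = Mq.1 ∧ (PCG.prod (TabPiGraph ι) (TabPiGraph κ)).E l Mp.2 Mq.2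

/-! ## 1-based matrix entries and shape vectors -/

/-- The `(i,j)` entry of `M` in 1-based coordinates, with the convention that entries outside
the matrix are `0`. -/
def ent {m n : ℕ} (M : Matrix (Fin m) (Fin n) ℕ) (i j : ℕ) : ℕ :=
  if h : 1 ≤ i ∧ i ≤ m ∧ 1 ≤ j ∧ j ≤ n then M ⟨i - 1, by omega⟩ ⟨j - 1, by omega⟩ else 0

/-- The partition `(lam (lo+1), lam (lo+2), …, lam (lo+size))` with trailing zero parts
removed: the shape of the block of a filtered partition-tuple written as an integer vector. -/
def blockShape (lam : ℕ → ℕ) (lo size : ℕ) : List ℕ :=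
  ((List.range size).map fun t => lam (lo + t + 1)).filter fun x => decide (0 < x)

/-- The highest-weight tableau-tuple of the filtered partition-tuple written as an integer
vector `lam : ℕ → ℕ` (1-based). -/
def highestFromVec {r : ℕ} (ι : Fin (r + 1) → ℕ) (lam : ℕ → ℕ) : Fin r → List (List ℕ) :=
  fun k => highestTab (blockShape lam (ι k.castSucc) (ι k.succ - ι k.castSucc))
    (ι k.castSucc + 1)

/-! ## Partial permutations and matrix Schubert combinatorics -/

/-- A partial permutation: at most one `1` in each row and column; encoded as an injective
partial function from rows to columns (`none` encodes `∞`). -/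
def IsPartialPerm {m n : ℕ} (w : Fin m → Option (Fin n)) : Prop :=
  ∀ a a' b, w a = some b → w a' = some b → a = a'

/-- The cell `(i, j)` lies in the Rothe diagram `D(w)`: it is not weakly below nor weakly
right of a dot of the partial permutation matrix. -/
def InD {m n : ℕ} (w : Fin m → Option (Fin n)) (i : Fin m) (j : Fin n) : Prop :=
  (∀ b, w i = some b → (j : ℕ) < (b : ℕ)) ∧ (∀ a, a ≤ i → w a ≠ some j)

/-- The row descent positions of `w` (1-based): rows `i` such that the rightmost box of
`D(w)` in row `i` is strictly right of the rightmost box in row `i + 1`. -/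
def DescRow {m n : ℕ} (w : Fin m → Option (Fin n)) : Set ℕ :=
  {i | ∃ (h1 : 1 ≤ i) (h2 : i < m), ∃ j : Fin n,
    InD w ⟨i - 1, by omega⟩ j ∧ ∀ j' : Fin n, InD w ⟨i, h2⟩ j' → (j' : ℕ) < (j : ℕ)}

/-- The column descent positions of `w` (1-based). -/
def DescCol {m n : ℕ} (w : Fin m → Option (Fin n)) : Set ℕ :=
  {j | ∃ (h1 : 1 ≤ j) (h2 : j < n), ∃ i : Fin m,
    InD w i ⟨j - 1, by omega⟩ ∧ ∀ i' : Fin m, InD w i' ⟨j, h2⟩ → (i' : ℕ) < (i : ℕ)}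

/-- The rank function `r_w(i,j)`: the rank of the northwest `i × j` submatrix of the partial
permutation matrix, i.e. the number of dots in that submatrix. -/
noncomputable def rankFn {m n : ℕ} (w : Fin m → Option (Fin n)) (i j : ℕ) : ℕ :=
  Set.ncard {a : Fin m | (a : ℕ) < i ∧ ∃ b : Fin n, w a = some b ∧ (b : ℕ) < j}

/-- The matrix Schubert variety `X_w ⊆ Mat_{m,n}(ℂ)`: matrices whose northwest `i × j`
submatrices have rank at most `r_w(i,j)`. -/
def XSchubert {m n : ℕ} (w : Fin m → Option (Fin n)) : Set (Matrix (Fin m) (Fin n) ℂ) :=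
  {A | ∀ (i : ℕ) (hi : i ≤ m) (j : ℕ) (hj : j ≤ n),
    (A.submatrix (Fin.castLE hi) (Fin.castLE hj)).rank ≤ rankFn w i j}

/-- `g` is block-diagonal with diagonal blocks of sizes `i₁ - i₀, …, i_r - i_{r-1}`. -/
def IsBlockDiag {m : ℕ} {r : ℕ} (ι : Fin (r + 1) → ℕ) (g : Matrix (Fin m) (Fin m) ℂ) :
    Prop :=
  ∀ a b : Fin m,
    (¬ ∃ k : Fin r, ι k.castSucc ≤ (a : ℕ) ∧ (a : ℕ) < ι k.succ ∧
        ι k.castSucc ≤ (b : ℕ) ∧ (b : ℕ) < ι k.succ) → g a b = 0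

/-- `(p, q)` (0-based) is a cell of the essential set `E(w)`. -/
def EssCell {m n : ℕ} (w : Fin m → Option (Fin n)) (p : Fin m) (q : Fin n) : Prop :=
  InD w p q ∧ (∀ hq : (q : ℕ) + 1 < n, ¬ InD w p ⟨(q : ℕ) + 1, hq⟩) ∧
    (∀ hp : (p : ℕ) + 1 < m, ¬ InD w ⟨(p : ℕ) + 1, hp⟩ q)

/-- `N` carries an antidiagonal of some Fulton generator of the Schubert determinantal ideal
of `w`: there are an essential cell `(p,q)`, `t = r_w(p,q) + 1` rows `r₁ < ⋯ < r_t ≤ p` and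
columns `c₁ < ⋯ < c_t ≤ q` with `N_{r_s, c_{t+1-s}} ≥ 1` for all `s`. -/
def CarriesAntidiag {m n : ℕ} (w : Fin m → Option (Fin n))
    (N : Matrix (Fin m) (Fin n) ℕ) : Prop :=
  ∃ (p : Fin m) (q : Fin n), EssCell w p q ∧
    ∃ (rr : Fin (rankFn w ((p : ℕ) + 1) ((q : ℕ) + 1) + 1) → Fin m)
      (cc : Fin (rankFn w ((p : ℕ) + 1) ((q : ℕ) + 1) + 1) → Fin n),
      StrictMono rr ∧ StrictMono cc ∧ (∀ t, rr t ≤ p) ∧ (∀ t, cc t ≤ q) ∧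
      ∀ t, 1 ≤ N (rr t) (cc t.rev)


/-!
The cells of `M`, each repeated `M i j` times and read column by column from top to bottom,
form the list `rowCells M`, sorted by column-major index; since the index is injective, a
matrix is the same thing as such a sorted list, and `row(M)` is this list with each cell
replaced by its row. The cell chosen by `f_i` on `row(M)` is the last copy of some `(i, j)`
(the next letter is not `i`), so replacing it by `(i + 1, j)` keeps the list sorted: the result
is the cell list of `f_i^row(M)`, and `row` commutes with `f_i`. Dually, the letter changed by
`f_i` is the first copy of `(i + 1, j)` in the target, which lets an incoming edge be lifted
through `shiftUp`. Row moves never change the sequence of column indices of the cell list,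
and together with `row(M)` it determines `M`; so `row` is injective on components. Finally
`col(M) = row(Mᵀ)` and `f_j^col` is `f_j^row` conjugated by transposition.
-/

section SortedByKey

variable {α : Type*} {f : α → ℕ} {l : List α}

lemma _root_.List.Pairwise.set_of_le (hl : l.Pairwise (f · ≤ f ·)) {p : ℕ} {y : α}
    (hbefore : ∀ q (hq : q < l.length), q < p → f l[q] ≤ f y)
    (hafter : ∀ q (hq : q < l.length), p < q → f y ≤ f l[q]) :
    (l.set p y).Pairwise (f · ≤ f ·) := by
  rw [List.pairwise_iff_getElem] at hl ⊢
  intro i j hi hj hij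
  simp only [List.length_set] at hi hj
  simp only [List.getElem_set]
  split_ifs with h1 h2 h2
  · omega
  · exact hafter j hj (by omega)
  · exact hbefore i hi (by omega)
  · exact hl i j hi hj hij

lemma _root_.List.Pairwise.lt_of_lt_of_getElem?_ne (hf : Function.Injective f)
    (hl : l.Pairwise (f · ≤ f ·)) {p : ℕ} {c : α} (hp : l[p]? = some c)
    (hnext : l[p + 1]? ≠ some c) {q : ℕ} (hq : q < l.length) (hpq : p < q) : f c < f l[q] := by
  rw [List.pairwise_iff_getElem] at hl
  obtain ⟨hp', rfl⟩ := List.getElem?_eq_some_iff.1 hp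
  have hne : f l[p] ≠ f l[p + 1] := fun h => hnext (by rw [hf h, List.getElem?_eq_getElem])
  have := hl p (p + 1) hp' (by omega) (by omega)
  rcases Nat.lt_or_ge (p + 1) q with h | h
  · have := hl (p + 1) q (by omega) hq h
    omega
  · obtain rfl : q = p + 1 := by omega
    omega

lemma _root_.List.Pairwise.lt_of_gt_of_getElem?_ne (hf : Function.Injective f)
    (hl : l.Pairwise (f · ≤ f ·)) {p : ℕ} {c : α} (hp : l[p]? = some c)
    (hprev : p = 0 ∨ l[p - 1]? ≠ some c) {q : ℕ} (hq : q < l.length) (hqp : q < p) :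
    f l[q] < f c := by
  rw [List.pairwise_iff_getElem] at hl
  obtain ⟨hp', rfl⟩ := List.getElem?_eq_some_iff.1 hp
  have hne : f l[p - 1] ≠ f l[p] := fun h =>
    hprev.elim (by omega) fun h' => h' (by rw [← hf h, List.getElem?_eq_getElem])
  have := hl (p - 1) p (by omega) hp' (by omega)
  rcases Nat.lt_or_ge q (p - 1) with h | h
  · have := hl q (p - 1) hq (by omega) h
    omega
  · obtain rfl : q = p - 1 := by omega
    omega

lemma _root_.List.set_eq_self_of_getElem? {p : ℕ} {a : α} (h : l[p]? = some a) :
    l.set p a = l := by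
  rw [← (List.getElem?_eq_some_iff.1 h).2, List.set_getElem_self]

end SortedByKey

namespace PCG

variable {V V₀ V' L W W' : Type*} {G : PCG V L W} {G₀ : PCG V₀ L W}

lemma reach_iff_of_equiv (e : V ≃ V₀) (hverts : ∀ v, v ∈ G.verts ↔ e v ∈ G₀.verts)
    (hE : ∀ l u v, G.E l u v ↔ G₀.E l (e u) (e v)) {u v : V} :
    G.Reach u v ↔ G₀.Reach (e u) (e v) := by
  have hadj : ∀ u v, G.Adj u v ↔ G₀.Adj (e u) (e v) := by
    simp [Adj, hverts, hE]
  refine ⟨fun h => Relation.ReflTransGen.lift e (fun a b h => (hadj a b).1 h) _ _ h,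
    fun h => ?_⟩
  simpa [Function.onFun, Reach] using
    Relation.ReflTransGen.lift e.symm (fun a b h => (hadj _ _).2 (by simpa using h)) _ _ h

theorem IsLocalIsoVia.comp_equiv {H : PCG V' L W'} {ω : W → W'} {f : V₀ → V'}
    (e : V ≃ V₀)
    (hverts : ∀ v, v ∈ G.verts ↔ e v ∈ G₀.verts) (hwt : ∀ v, G₀.wt (e v) = G.wt v)
    (hE : ∀ l u v, G.E l u v ↔ G₀.E l (e u) (e v)) (hf : IsLocalIsoVia G₀ H ω f) :
    IsLocalIsoVia G H ω (f ∘ e) := by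
  obtain ⟨⟨hmaps, hfwt, hfE⟩, hinj, hsurj, hrefl⟩ := hf
  refine ⟨⟨fun v hv => hmaps _ ((hverts v).1 hv), fun v hv => ?_, fun l u hu v hv h => ?_⟩,
    fun u hu v hv h hfuv => ?_, fun u hu w hw h => ?_, fun l u hu v hv h hE' => ?_⟩
  · simpa [hwt] using hfwt _ ((hverts v).1 hv)
  · exact hfE l _ ((hverts u).1 hu) _ ((hverts v).1 hv) ((hE l u v).1 h)
  · exact e.injective (hinj _ ((hverts u).1 hu) _ ((hverts v).1 hv)
      ((reach_iff_of_equiv e hverts hE).1 h) hfuv)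
  · obtain ⟨v₀, hv₀, hreach, rfl⟩ := hsurj _ ((hverts u).1 hu) w hw h
    refine ⟨e.symm v₀, (hverts _).2 (by simpa using hv₀), ?_, by simp⟩
    simpa using
      (reach_iff_of_equiv e hverts hE (u := u) (v := e.symm v₀)).2 (by simpa using hreach)
  · exact (hE l u v).2 (hrefl l _ ((hverts u).1 hu) _ ((hverts v).1 hv)
      ((reach_iff_of_equiv e hverts hE).1 h) hE')

end PCG

section Bracket

variable {i : ℕ} {w : List ℕ}

def scanStep (i : ℕ) (st : List ℕ × List ℕ) (p : ℕ × ℕ) : List ℕ × List ℕ :=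
  if p.2 = i + 1 then (st.1, p.1 :: st.2)
  else if p.2 = i then
    match st.2 with
    | [] => (p.1 :: st.1, [])
    | _ :: rest => (st.1, rest)
  else st

lemma bracketScan_eq_foldl (i : ℕ) (w : List ℕ) :
    bracketScan i w = ((List.range w.length).zip w).foldl (scanStep i) ([], []) := rfl

/-- After reading `w[0], …, w[t-1]`: the facts about the last unmatched `)` that `fPos_spec`
needs, kept inductive by remembering that a letter `i + 1` just read is an unmatched `(`. -/
def ScanInv (i : ℕ) (w : List ℕ) (t : ℕ) (st : List ℕ × List ℕ) : Prop :=
  (∀ p, st.1.head? = some p → w[p]? = some i ∧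
    ((p + 1 = t ∧ st.2 = []) ∨ w[p + 1]? ≠ some i) ∧ (p = 0 ∨ w[p - 1]? ≠ some (i + 1))) ∧
  (∀ x, t = x + 1 → w[x]? = some (i + 1) → st.2 ≠ [])

lemma ScanInv.scanStep {t x : ℕ} {st : List ℕ × List ℕ} (h : ScanInv i w t st)
    (hx : w[t]? = some x) : ScanInv i w (t + 1) (scanStep i st (t, x)) := by
  obtain ⟨hU, hS⟩ := h
  unfold FilteredRSK.scanStep
  split_ifs with hopen hclose
  · obtain rfl : x = i + 1 := hopen
    refine ⟨fun p hp => ?_, fun _ _ _ => List.cons_ne_nil _ _⟩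
    obtain ⟨hwp, hnext, hprev⟩ := hU p hp
    refine ⟨hwp, Or.inr ?_, hprev⟩
    rcases hnext with ⟨rfl, -⟩ | hnext
    · simp [hx]
    · exact hnext
  · obtain rfl : x = i := hclose
    rcases hst : st.2 with _ | ⟨q, rest⟩
    · refine ⟨fun p hp => ?_, fun y hy hwy => ?_⟩
      · obtain rfl : t = p := by simpa using hp
        refine ⟨hx, Or.inl ⟨rfl, rfl⟩, ?_⟩
        rcases t with _ | t
        · exact Or.inl rfl
        · exact Or.inr fun hw => hS t rfl hw hst
      · obtain rfl : y = t := by omega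
        simp_all
    · refine ⟨fun p hp => ?_, fun y hy hwy => ?_⟩
      · obtain ⟨hwp, hnext, hprev⟩ := hU p hp
        refine ⟨hwp, Or.inr ?_, hprev⟩
        rcases hnext with ⟨-, hnil⟩ | hnext
        · simp [hst] at hnil
        · exact hnext
      · obtain rfl : y = t := by omega
        simp_all
  · replace hclose : x ≠ i := hclose
    refine ⟨fun p hp => ?_, fun y hy hwy => ?_⟩
    · obtain ⟨hwp, hnext, hprev⟩ := hU p hp
      refine ⟨hwp, Or.inr ?_, hprev⟩
      rcases hnext with ⟨rfl, -⟩ | hnext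
      · simp [hx, hclose]
      · exact hnext
    · obtain rfl : y = t := by omega
      simp_all

lemma scanInv_bracketScan (i : ℕ) (w : List ℕ) : ScanInv i w w.length (bracketScan i w) := by
  suffices ∀ k ≤ w.length,
      ScanInv i w k ((((List.range w.length).zip w).take k).foldl (scanStep i) ([], [])) by
    simpa [bracketScan_eq_foldl, List.take_of_length_le] using this w.length le_rfl
  intro k hk
  induction k with
  | zero => exact ⟨by simp, by simp⟩
  | succ k ih =>
    have hget : ((List.range w.length).zip w)[k]? = some (k, w[k]) := by grind
    rw [List.take_add_one, hget, Option.toList_some, List.foldl_append, List.foldl_cons,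
      List.foldl_nil]
    exact (ih (by omega)).scanStep (List.getElem?_eq_getElem _)

lemma fPos_spec {p : ℕ} (h : fPos i w = some p) :
    w[p]? = some i ∧ w[p + 1]? ≠ some i ∧ (p = 0 ∨ w[p - 1]? ≠ some (i + 1)) := by
  obtain ⟨hwp, hnext | hnext, hprev⟩ := (scanInv_bracketScan i w).1 p h
  · exact ⟨hwp, by simp [hnext.1], hprev⟩
  · exact ⟨hwp, hnext, hprev⟩

end Bracket

section Cells

variable {m n : ℕ}

def colMajorIndex (c : Fin m × Fin n) : ℕ := c.1 + m * c.2

lemma colMajorIndex_injective : Function.Injective (colMajorIndex : Fin m × Fin n → ℕ) := by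
  intro a b h
  have index_eq (c : Fin m × Fin n) : colMajorIndex c = finProdFinEquiv (c.2, c.1) := by
    simp [colMajorIndex, finProdFinEquiv]
  have := finProdFinEquiv.injective (Fin.ext ((index_eq a).symm.trans (h.trans (index_eq b))))
  simp only [Prod.mk.injEq] at this
  exact Prod.ext this.2 this.1

lemma rowCells_pairwise (M : Matrix (Fin m) (Fin n) ℕ) :
    (rowCells M).Pairwise (colMajorIndex · ≤ colMajorIndex ·) := by
  have hm := (List.sortedLT_finRange m).pairwise
  have hn := (List.sortedLT_finRange n).pairwise
  simp only [rowCells, List.pairwise_flatMap, List.pairwise_replicate, List.mem_flatMap,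
    List.mem_replicate]
  refine ⟨fun j _ => ⟨fun i _ => Or.inr le_rfl, ?_⟩, ?_⟩
  · refine (hm.imp fun {a b} hab => ?_)
    rintro _ ⟨-, rfl⟩ _ ⟨-, rfl⟩
    simp only [colMajorIndex]
    omega
  · refine (hn.imp fun {a b} hab => ?_)
    rintro _ ⟨i, -, -, rfl⟩ _ ⟨i', -, -, rfl⟩
    simp only [colMajorIndex]
    have hcol : m * (a + 1) ≤ m * b := Nat.mul_le_mul_left m hab
    rw [Nat.mul_add_one] at hcol
    have := i.isLt
    omega

lemma count_rowCells (M : Matrix (Fin m) (Fin n) ℕ) (c : Fin m × Fin n) :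
    (rowCells M).count c = M c.1 c.2 := by
  simp only [rowCells, List.count_flatMap, List.count_replicate, Function.comp_def,
    ← Fin.sum_univ_def]
  simp [Prod.ext_iff, Finset.sum_ite_eq', ite_and]

lemma rowCells_injective : Function.Injective (rowCells : Matrix (Fin m) (Fin n) ℕ → _) :=
  fun M N h => funext₂ fun a b => by rw [← count_rowCells M (a, b), h, count_rowCells]

lemma rowCells_eq_of_pairwise {M : Matrix (Fin m) (Fin n) ℕ} {l : List (Fin m × Fin n)}
    (hl : l.Pairwise (colMajorIndex · ≤ colMajorIndex ·))
    (hcount : ∀ c, l.count c = M c.1 c.2) :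
    rowCells M = l :=
  List.Perm.eq_of_pairwise (fun _ _ _ _ h h' => colMajorIndex_injective (le_antisymm h h'))
    (rowCells_pairwise M) hl
    (List.perm_iff_count.2 fun c => by rw [count_rowCells, hcount])

lemma rowWord_eq_map (M : Matrix (Fin m) (Fin n) ℕ) :
    rowWord M = (rowCells M).map fun c => (c.1 : ℕ) + 1 := by
  simp [rowWord, rowCells, List.map_flatMap]

end Cells

section Shift

variable {m n : ℕ}

lemma rowCells_shiftDown {M : Matrix (Fin m) (Fin n) ℕ} {p : ℕ} {c : Fin m × Fin n}
    (hc : (rowCells M)[p]? = some c) (hnext : (rowCells M)[p + 1]? ≠ some c)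
    (hlt : (c.1 : ℕ) + 1 < m) :
    rowCells (shiftDown M c) = (rowCells M).set p (⟨c.1 + 1, hlt⟩, c.2) := by
  have hMc : 0 < M c.1 c.2 := by
    rw [← count_rowCells M c, List.count_pos_iff]
    exact List.mem_of_getElem? hc
  obtain ⟨hp, hcp⟩ := List.getElem?_eq_some_iff.1 hc
  apply rowCells_eq_of_pairwise
  · refine (rowCells_pairwise M).set_of_le (fun q hq hqp => ?_) (fun q hq hpq => ?_)
    · have := List.pairwise_iff_getElem.1 (rowCells_pairwise M) q p hq hp hqp
      simp only [hcp, colMajorIndex] at this ⊢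
      omega
    · have :=
        (rowCells_pairwise M).lt_of_lt_of_getElem?_ne colMajorIndex_injective hc hnext hq hpq
      simp only [colMajorIndex] at this ⊢
      omega
  · intro x
    rw [List.count_set hp, count_rowCells, hcp]
    obtain ⟨a, b⟩ := x
    simp only [shiftDown, beq_iff_eq, Prod.ext_iff, Fin.ext_iff]
    split_ifs <;> omega

lemma rowCells_shiftUp {M : Matrix (Fin m) (Fin n) ℕ} {p : ℕ} {c : Fin m × Fin n}
    (hc : (rowCells M)[p]? = some c) (hprev : p = 0 ∨ (rowCells M)[p - 1]? ≠ some c)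
    (hrow : 0 < (c.1 : ℕ)) :
    rowCells (shiftUp M c) = (rowCells M).set p (⟨c.1 - 1, by omega⟩, c.2) := by
  have hMc : 0 < M c.1 c.2 := by
    rw [← count_rowCells M c, List.count_pos_iff]
    exact List.mem_of_getElem? hc
  obtain ⟨hp, hcp⟩ := List.getElem?_eq_some_iff.1 hc
  apply rowCells_eq_of_pairwise
  · refine (rowCells_pairwise M).set_of_le (fun q hq hqp => ?_) (fun q hq hpq => ?_)
    · have :=
        (rowCells_pairwise M).lt_of_gt_of_getElem?_ne colMajorIndex_injective hc hprev hq hqp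
      simp only [colMajorIndex] at this ⊢
      omega
    · have := List.pairwise_iff_getElem.1 (rowCells_pairwise M) p q hp hq hpq
      simp only [hcp, colMajorIndex] at this ⊢
      omega
  · intro x
    rw [List.count_set hp, count_rowCells, hcp]
    obtain ⟨a, b⟩ := x
    simp only [shiftUp, beq_iff_eq, Prod.ext_iff, Fin.ext_iff]
    split_ifs <;> omega

end Shift

section Transport

variable {m n : ℕ}

lemma getElem?_rowWord (M : Matrix (Fin m) (Fin n) ℕ) (p : ℕ) :
    (rowWord M)[p]? = (rowCells M)[p]?.map fun c => (c.1 : ℕ) + 1 := by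
  rw [rowWord_eq_map, List.getElem?_map]

lemma getElem?_rowCells_ne {M : Matrix (Fin m) (Fin n) ℕ} {p : ℕ} {c : Fin m × Fin n}
    (h : (rowWord M)[p]? ≠ some ((c.1 : ℕ) + 1)) : (rowCells M)[p]? ≠ some c :=
  fun hc => h (by rw [getElem?_rowWord, hc, Option.map_some])

lemma rowCells_shiftDown_of_fPos {i p : ℕ} {M : Matrix (Fin m) (Fin n) ℕ} (hi : i < m)
    (hp : fPos i (rowWord M) = some p) :
    ∃ c, ∃ hlt : (c.1 : ℕ) + 1 < m, (rowCells M)[p]? = some c ∧ (c.1 : ℕ) + 1 = i ∧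
      rowCells (shiftDown M c) = (rowCells M).set p (⟨c.1 + 1, hlt⟩, c.2) := by
  obtain ⟨hwp, hnext, -⟩ := fPos_spec hp
  rw [getElem?_rowWord] at hwp
  obtain ⟨c, hc, hci⟩ := Option.map_eq_some_iff.1 hwp
  subst hci
  exact ⟨c, hi, hc, rfl, rowCells_shiftDown hc (getElem?_rowCells_ne hnext) hi⟩

lemma fWord_rowWord {i : ℕ} (M : Matrix (Fin m) (Fin n) ℕ) (hi : i < m) :
    fWord i (rowWord M) = (fRow i M).map rowWord := by
  unfold fWord fRow
  rcases hp : fPos i (rowWord M) with _ | p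
  · rfl
  obtain ⟨c, hlt, hc, rfl, hcells⟩ := rowCells_shiftDown_of_fPos hi hp
  simp only [Option.map_some, Option.bind_some, hc]
  rw [rowWord_eq_map, rowWord_eq_map, hcells, List.map_set]

lemma map_snd_rowCells_fRow {i : ℕ} {M M' : Matrix (Fin m) (Fin n) ℕ} (hi : i < m)
    (h : fRow i M = some M') : (rowCells M').map Prod.snd = (rowCells M).map Prod.snd := by
  obtain ⟨p, hp, h⟩ := Option.bind_eq_some_iff.1 h
  obtain ⟨c, hlt, hc, -, hcells⟩ := rowCells_shiftDown_of_fPos hi hp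
  rw [hc, Option.map_some, Option.some_inj] at h
  rw [← h, hcells, List.map_set]
  exact List.set_eq_self_of_getElem? (by simp [hc])

lemma eq_of_rowWord_eq {M N : Matrix (Fin m) (Fin n) ℕ} (h : rowWord M = rowWord N)
    (hsnd : (rowCells M).map Prod.snd = (rowCells N).map Prod.snd) : M = N := by
  have hfst : (rowCells M).map Prod.fst = (rowCells N).map Prod.fst := by
    have hinj : Function.Injective fun a : Fin m => (a : ℕ) + 1 :=
      fun a b hab => Fin.ext (by simpa using hab)
    apply List.map_injective_iff.2 hinj
    simpa only [rowWord_eq_map, List.map_map, Function.comp_def] using h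
  apply rowCells_injective
  rw [← List.zip_unzip (rowCells M), ← List.zip_unzip (rowCells N), List.unzip_fst,
    List.unzip_snd, List.unzip_fst, List.unzip_snd, hfst, hsnd]

lemma fRow_shiftUp {M : Matrix (Fin m) (Fin n) ℕ} {p : ℕ} {c : Fin m × Fin n}
    (hc : (rowCells M)[p]? = some c) (hprev : p = 0 ∨ (rowCells M)[p - 1]? ≠ some c)
    (hrow : 0 < (c.1 : ℕ)) (hp : fPos c.1 (rowWord (shiftUp M c)) = some p) :
    fRow c.1 (shiftUp M c) = some M := by
  have hup := rowCells_shiftUp hc hprev hrow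
  set c' : Fin m × Fin n := (⟨c.1 - 1, by omega⟩, c.2) with hc'
  have hc'1 : (c'.1 : ℕ) + 1 = c.1 := by simp only [hc']; omega
  have hc'p : (rowCells (shiftUp M c))[p]? = some c' := by
    rw [hup, List.getElem?_set_self (List.getElem?_eq_some_iff.1 hc).1]
  have hnext : (rowCells (shiftUp M c))[p + 1]? ≠ some c' :=
    getElem?_rowCells_ne (hc'1 ▸ (fPos_spec hp).2.1)
  unfold fRow
  rw [hp, Option.bind_some, hc'p, Option.map_some]
  congr 1
  apply rowCells_injective
  rw [rowCells_shiftDown hc'p hnext (by omega), hup, List.set_set,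
    show ((⟨c'.1 + 1, _⟩, c'.2) : Fin m × Fin n) = c from Prod.ext (Fin.ext hc'1) rfl,
    List.set_eq_self_of_getElem? hc]

lemma exists_fRow_eq_some {i : ℕ} {w : List ℕ} {M' : Matrix (Fin m) (Fin n) ℕ}
    (hi : 1 ≤ i) (h : fWord i w = some (rowWord M')) :
    ∃ M, rowWord M = w ∧ fRow i M = some M' := by
  obtain ⟨p, hp, hset⟩ := Option.map_eq_some_iff.1 h
  obtain ⟨hwp, -, hprev⟩ := fPos_spec hp
  have hw'p : (rowWord M')[p]? = some (i + 1) := by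
    simp [← hset, (List.getElem?_eq_some_iff.1 hwp).1]
  rw [getElem?_rowWord] at hw'p
  obtain ⟨c, hc, hci⟩ := Option.map_eq_some_iff.1 hw'p
  obtain rfl : (c.1 : ℕ) = i := by simpa using hci
  have hprev' : p = 0 ∨ (rowCells M')[p - 1]? ≠ some c := by
    rcases Nat.eq_zero_or_pos p with hp0 | hp0
    · exact Or.inl hp0
    refine Or.inr (getElem?_rowCells_ne ?_)
    rw [← hset, List.getElem?_set_ne (by omega)]
    exact hprev.resolve_left (by omega)
  have hword : rowWord (shiftUp M' c) = w := by
    rw [rowWord_eq_map, rowCells_shiftUp hc hprev' hi, List.map_set, ← rowWord_eq_map, ← hset,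
      List.set_set, show (c.1 : ℕ) - 1 + 1 = c.1 by omega,
      List.set_eq_self_of_getElem? hwp]
  exact ⟨shiftUp M' c, hword, fRow_shiftUp hc hprev' hi (hword ▸ hp)⟩

end Transport

section RowLocalIso

variable {m n : ℕ}

lemma mem_rowWord {M : Matrix (Fin m) (Fin n) ℕ} {x : ℕ} (hx : x ∈ rowWord M) :
    1 ≤ x ∧ x ≤ m := by
  rw [rowWord_eq_map, List.mem_map] at hx
  obtain ⟨c, -, rfl⟩ := hx
  omega

lemma map_snd_rowCells_of_reach {M N : Matrix (Fin m) (Fin n) ℕ}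
    (h : (MRowGraph m n).Reach M N) : (rowCells N).map Prod.snd = (rowCells M).map Prod.snd := by
  induction h with
  | refl => rfl
  | tail _ hadj ih =>
    obtain ⟨-, -, l, ⟨-, hl, hE⟩ | ⟨-, hl, hE⟩⟩ := hadj
    · rw [map_snd_rowCells_fRow hl hE, ih]
    · rw [← map_snd_rowCells_fRow hl hE, ih]

theorem isLocalIsoVia_rowWord (m n : ℕ) :
    PCG.IsLocalIsoVia (MRowGraph m n) (WordGraph 1 m) id rowWord := by
  refine ⟨⟨fun M _ x hx => mem_rowWord hx, fun _ _ => rfl, ?_⟩, ?_, ?_, ?_⟩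
  · rintro l M - M' - ⟨hl1, hlm, h⟩
    exact ⟨hl1, hlm, by rw [fWord_rowWord M hlm, h, Option.map_some]⟩
  · rintro M - N - hreach hword
    exact eq_of_rowWord_eq hword (map_snd_rowCells_of_reach hreach).symm
  · rintro M - w - hreach
    induction hreach with
    | refl => exact ⟨M, trivial, .refl, rfl⟩
    | tail _ hadj ih =>
      obtain ⟨-, -, l, ⟨hl1, hlm, h⟩ | ⟨hl1, hlm, h⟩⟩ := hadj
      · obtain ⟨N, -, hreach, rfl⟩ := ih
        rw [fWord_rowWord N hlm] at h
        obtain ⟨N', hN', rfl⟩ := Option.map_eq_some_iff.1 h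
        exact ⟨N', trivial, hreach.tail ⟨trivial, trivial, l, .inl ⟨hl1, hlm, hN'⟩⟩,
          rfl⟩
      · obtain ⟨N, -, hreach, rfl⟩ := ih
        obtain ⟨N', rfl, hN'⟩ := exists_fRow_eq_some hl1 h
        exact ⟨N', trivial, hreach.tail ⟨trivial, trivial, l, .inr ⟨hl1, hlm, hN'⟩⟩,
          rfl⟩
  · rintro l M - N - hreach ⟨hl1, hlm, h⟩
    rw [fWord_rowWord M hlm] at h
    obtain ⟨N', hN', hword⟩ := Option.map_eq_some_iff.1 h
    obtain rfl : N' = N := eq_of_rowWord_eq hword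
      ((map_snd_rowCells_fRow hlm hN').trans (map_snd_rowCells_of_reach hreach).symm)
    exact ⟨hl1, hlm, hN'⟩

end RowLocalIso

section ColLocalIso

open Matrix

variable {m n : ℕ}

lemma colCells_eq_map_swap (M : Matrix (Fin m) (Fin n) ℕ) :
    colCells M = (rowCells Mᵀ).map Prod.swap := by
  simp [colCells, rowCells, List.map_flatMap]

lemma shiftRight_swap (M : Matrix (Fin m) (Fin n) ℕ) (c : Fin n × Fin m) :
    shiftRight M c.swap = (shiftDown Mᵀ c)ᵀ := by
  ext a b
  simp [shiftRight, shiftDown, and_comm]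

lemma fCol_eq_map_fRow (j : ℕ) (M : Matrix (Fin m) (Fin n) ℕ) :
    fCol j M = (fRow j Mᵀ).map transpose := by
  change (fPos j (rowWord Mᵀ)).bind _ = _
  simp only [fRow, Option.map_bind, colCells_eq_map_swap, List.getElem?_map, Option.map_map,
    Function.comp_def, shiftRight_swap]

lemma mColGraph_E_iff {l : ℕ} {M M' : Matrix (Fin m) (Fin n) ℕ} :
    (MColGraph m n).E l M M' ↔ (MRowGraph n m).E l Mᵀ M'ᵀ := by
  change _ ∧ _ ∧ fCol l M = _ ↔ _ ∧ _ ∧ _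
  rw [fCol_eq_map_fRow, Option.map_eq_some_iff]
  constructor <;> rintro ⟨h1, h2, h⟩ <;> refine ⟨h1, h2, ?_⟩
  · obtain ⟨N, hN, rfl⟩ := h
    rwa [transpose_transpose]
  · exact ⟨_, h, transpose_transpose M'⟩

theorem isLocalIsoVia_colWord (m n : ℕ) :
    PCG.IsLocalIsoVia (MColGraph m n) (WordGraph 1 n) id colWord :=
  (isLocalIsoVia_rowWord n m).comp_equiv (transposeAddEquiv (Fin m) (Fin n) ℕ).toEquiv
    (fun _ => Iff.rfl) (fun _ => rfl) fun _ _ _ => mColGraph_E_iff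

end ColLocalIso

/-- The maps `row : M^row_{m,n} → W_m` and `col : M^col_{m,n} → W_n`,
given on vertices by `M ↦ row(M)` and `M ↦ col(M)`, are local isomorphisms of
pre-crystal graphs. -/
theorem row_col_local_isomorphisms (m n : ℕ) :
    PCG.IsLocalIsoVia (MRowGraph m n) (WordGraph 1 m) id rowWord ∧
    PCG.IsLocalIsoVia (MColGraph m n) (WordGraph 1 n) id colWord :=
  ⟨isLocalIsoVia_rowWord m n, isLocalIsoVia_colWord m n⟩

end FilteredRSK
end

section
/- Fix I = {0 = i_0 < … < i_r = m} and J = {0 = j_0 < … < j_s = n}, and an (I|J)-filtered partition-tuple (λ|μ), written as an integer vector (λ_1,…,λ_m | μ_1,…,μ_n) with λ_i ≥ λ_{i+1} for i ∉ I and μ_j ≥ μ_{j+1} for j ∉ J. Then the number of matrices M ∈ Mat_{m,n}(Z≥0) with filterRSK_{I|J}(M) = (T_λ | T_μ) equals the number of matrices M = [m_{ij}] ∈ Mat_{m,n}(Z≥0) (with the convention m_{ij} = 0 whenever i > m or j > n) satisfying: (i) Σ_{k=j}^{n} m_{i+1,k} ≤ Σ_{k=j}^{n} m_{i,k+1} for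 all i ∉ I and all j ∈ [n]; (ii) Σ_{k=i}^{m} m_{k,j+1} ≤ Σ_{k=i}^{m} m_{k+1,j} for all j ∉ J and all i ∈ [m]; (iii) Σ_{j=1}^n m_{ij} = λ_i for all i ∈ [m]; and (iv) Σ_{i=1}^m m_{ij} = μ_j for all j ∈ [n]. -/
namespace FilteredRSK

/-!
A word `w` with letters `≥ a` has insertion tableau the highest-weight tableau of shape `L`
exactly when `w` has content `L` and is a ballot word for every `i ≥ a`: each suffix contains
at least as many letters `i` as `i + 1`. Row insertion only performs Knuth moves, which
preserve content and ballotness, and the row reading word of a highest-weight tableau is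
ballot. Conversely, a semistandard tableau with ballot reading word has a constant first row,
and induction on the rows applies.

Filtering to a block `[i_{k-1}+1, i_k]` does not affect the ballot condition for letters
inside the block. The row word of a matrix is a concatenation of weakly increasing column
words, so its ballot condition for `i, i + 1` is exactly the family (i) of partial sum
inequalities, and its content is given by the row sums (iii). Applied to the transpose this
gives (ii) and (iv), so the two sets of matrices coincide.
-/

/-! ### Ballot words and Knuth moves -/

def Ballot (i : ℕ) (w : List ℕ) : Prop :=
  ∀ s, s <:+ w → s.count (i + 1) ≤ s.count i

theorem ballot_nil (i : ℕ) : Ballot i [] := by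
  intro s hs
  simp [List.suffix_nil.mp hs]

theorem ballot_cons {i a : ℕ} {w : List ℕ} :
    Ballot i (a :: w) ↔ (a :: w).count (i + 1) ≤ (a :: w).count i ∧ Ballot i w := by
  simp only [Ballot, List.suffix_cons_iff, or_imp, forall_and, forall_eq]

theorem Ballot.of_suffix {i : ℕ} {s w : List ℕ} (h : Ballot i w) (hs : s <:+ w) : Ballot i s :=
  fun t ht => h t (ht.trans hs)

theorem ballot_of_count_succ_eq_zero {i : ℕ} {w : List ℕ} (h : w.count (i + 1) = 0) :
    Ballot i w := fun s hs => by
  have := hs.sublist.count_le (i + 1)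
  omega

theorem not_ballot_cons_of_le {i : ℕ} {s : List ℕ} (hs : ∀ y ∈ s, i + 1 ≤ y) :
    ¬ Ballot i ((i + 1) :: s) := fun h => by
  have hi : s.count i = 0 := List.count_eq_zero.mpr fun hmem => by
    have := hs i hmem
    omega
  have := h _ List.suffix_rfl
  simp [hi] at this

theorem ballot_append_iff {i : ℕ} {u v : List ℕ} :
    Ballot i (u ++ v) ↔
      (∀ s, s <:+ u → (s ++ v).count (i + 1) ≤ (s ++ v).count i) ∧ Ballot i v := by
  induction u with
  | nil =>
    simp only [List.nil_append, List.suffix_nil, forall_eq]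
    exact ⟨fun h => ⟨h v List.suffix_rfl, h⟩, fun h => h.2⟩
  | cons a u ih =>
    simp only [List.cons_append, ballot_cons, ih, List.suffix_cons_iff, or_imp, forall_and,
      forall_eq, and_assoc]

theorem ballot_append_iff_of_count_eq_zero {i : ℕ} {u v : List ℕ} (hi : v.count i = 0)
    (hi1 : v.count (i + 1) = 0) : Ballot i (u ++ v) ↔ Ballot i u := by
  simp only [ballot_append_iff, List.count_append, hi, hi1, add_zero,
    ballot_of_count_succ_eq_zero hi1, and_true]
  exact ⟨fun h s hs => h s hs, fun h s hs => h s hs⟩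

theorem ballot_sorted_append_iff {i : ℕ} {c v : List ℕ} (hc : c.Pairwise (· ≤ ·)) :
    Ballot i (c ++ v) ↔ c.count (i + 1) + v.count (i + 1) ≤ v.count i ∧ Ballot i v := by
  induction c with
  | nil => exact ⟨fun h => ⟨by simpa using h v List.suffix_rfl, h⟩, fun h => h.2⟩
  | cons a c ih =>
    rw [List.pairwise_cons] at hc
    rw [List.cons_append, ballot_cons, ih hc.2]
    by_cases ha : a = i + 1
    · have hci : c.count i = 0 := List.count_eq_zero.mpr fun h => by
        have := hc.1 i h
        omega
      simp only [List.count_cons, List.count_append, ha, hci, beq_iff_eq, if_true,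
        show i + 1 ≠ i by omega, if_false]
      constructor
      · rintro ⟨h1, -, h2⟩
        exact ⟨by omega, h2⟩
      · rintro ⟨h1, h2⟩
        exact ⟨by omega, by omega, h2⟩
    · simp only [List.count_cons, List.count_append, beq_iff_eq, if_neg ha]
      constructor
      · rintro ⟨-, h⟩
        exact ⟨by omega, h.2⟩
      · rintro ⟨h1, h2⟩
        exact ⟨by split_ifs <;> omega, h1, h2⟩

theorem ballot_filter_iff {p : ℕ → Bool} {i : ℕ} (hi : p i) (hi1 : p (i + 1)) (w : List ℕ) :
    Ballot i (w.filter p) ↔ Ballot i w := by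
  induction w with
  | nil => rfl
  | cons a w ih =>
    by_cases ha : p a
    · rw [List.filter_cons_of_pos ha, ballot_cons, ballot_cons, ih, ← List.filter_cons_of_pos ha,
        List.count_filter hi, List.count_filter hi1]
    · rw [List.filter_cons_of_neg ha, ih, ballot_cons, List.count_cons, List.count_cons]
      have hai : a ≠ i := fun h => ha (h ▸ hi)
      have hai1 : a ≠ i + 1 := fun h => ha (h ▸ hi1)
      simp only [beq_iff_eq, hai, hai1, if_false, add_zero]
      exact ⟨fun h => ⟨h w List.suffix_rfl, h⟩, fun h => h.2⟩

theorem ballot_append_congr {i : ℕ} {w w' : List ℕ} (hp : w.Perm w')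
    (h : Ballot i w ↔ Ballot i w') (u : List ℕ) : Ballot i (u ++ w) ↔ Ballot i (u ++ w') := by
  induction u with
  | nil => exact h
  | cons a u ih =>
    simp only [List.cons_append, ballot_cons, List.count_cons, List.count_append, hp.count_eq, ih]

theorem KnuthStep.perm {w w' : List ℕ} (h : KnuthStep w w') : w.Perm w' := by
  rcases h with ⟨u, v, x, y, z⟩ | ⟨u, v, x, y, z⟩ <;>
  exact .append_left u (by simp [List.Perm.swap])

theorem KnuthStep.ballot_iff {i : ℕ} {w w' : List ℕ} (h : KnuthStep w w') :
    Ballot i w ↔ Ballot i w' := by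
  rcases h with ⟨u, v, x, y, z, h1, h2⟩ | ⟨u, v, x, y, z, h1, h2⟩ <;>
  · refine ballot_append_congr (by simp [List.Perm.swap]) ?_ u
    simp only [ballot_cons, List.count_cons, beq_iff_eq, ← and_assoc]
    refine and_congr_left fun hv => ?_
    have := hv v List.suffix_rfl
    split_ifs <;> omega

theorem KnuthEquiv.perm {w w' : List ℕ} (h : KnuthEquiv w w') : w.Perm w' := by
  induction h with
  | rel _ _ h => exact h.perm
  | refl => exact List.Perm.refl _
  | symm _ _ _ ih => exact ih.symm
  | trans _ _ _ _ _ ih ih' => exact ih.trans ih'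

theorem KnuthEquiv.ballot_iff {i : ℕ} {w w' : List ℕ} (h : KnuthEquiv w w') :
    Ballot i w ↔ Ballot i w' := by
  induction h with
  | rel _ _ h => exact h.ballot_iff
  | refl => exact Iff.rfl
  | symm _ _ _ ih => exact ih.symm
  | trans _ _ _ _ _ ih ih' => exact ih.trans ih'

theorem KnuthStep.knuthEquiv {v w : List ℕ} (h : KnuthStep v w) : KnuthEquiv v w :=
  Relation.EqvGen.rel _ _ h

theorem KnuthEquiv.refl (w : List ℕ) : KnuthEquiv w w :=
  Relation.EqvGen.refl w

theorem KnuthEquiv.symm {v w : List ℕ} (h : KnuthEquiv v w) : KnuthEquiv w v :=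
  Relation.EqvGen.symm _ _ h

theorem KnuthEquiv.trans {u v w : List ℕ} (h : KnuthEquiv u v) (h' : KnuthEquiv v w) :
    KnuthEquiv u w :=
  Relation.EqvGen.trans _ _ _ h h'

theorem KnuthStep.append_append {v w : List ℕ} (h : KnuthStep v w) (l r : List ℕ) :
    KnuthStep (l ++ v ++ r) (l ++ w ++ r) := by
  cases h with
  | yzx u v x y z h1 h2 => simpa using KnuthStep.yzx (l ++ u) (v ++ r) x y z h1 h2
  | zxy u v x y z h1 h2 => simpa using KnuthStep.zxy (l ++ u) (v ++ r) x y z h1 h2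

theorem KnuthEquiv.append_append {v w : List ℕ} (h : KnuthEquiv v w) (l r : List ℕ) :
    KnuthEquiv (l ++ v ++ r) (l ++ w ++ r) := by
  induction h with
  | rel _ _ h => exact (h.append_append l r).knuthEquiv
  | refl => exact KnuthEquiv.refl _
  | symm _ _ _ ih => exact ih.symm
  | trans _ _ _ _ _ ih ih' => exact ih.trans ih'

/-! ### Highest-weight tableaux -/

-- Rows read bottom to top. Unlike the column reading word `readingWord`, this is the word that
-- row insertion visibly changes by Knuth moves only.
def rowReadingWord (T : List (List ℕ)) : List ℕ := T.reverse.flatten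

theorem rowReadingWord_cons (R : List ℕ) (T : List (List ℕ)) :
    rowReadingWord (R :: T) = rowReadingWord T ++ R := by
  simp [rowReadingWord]

theorem highestTab_cons (l : ℕ) (L : List ℕ) (a : ℕ) :
    highestTab (l :: L) a = List.replicate l a :: highestTab L (a + 1) := by
  simp [highestTab, List.mapIdx_cons, Nat.add_right_comm, Nat.add_assoc]

theorem count_rowReadingWord_highestTab (L : List ℕ) (a c : ℕ) :
    (rowReadingWord (highestTab L a)).count c = if a ≤ c then L.getD (c - a) 0 else 0 := by
  induction L generalizing a with
  | nil => simp [highestTab, rowReadingWord]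
  | cons l L ih =>
    rw [highestTab_cons, rowReadingWord_cons, List.count_append, ih, List.count_replicate]
    rcases lt_trichotomy c a with h | rfl | h
    · simp [show ¬ a + 1 ≤ c by omega, show ¬ a ≤ c by omega, show a ≠ c by omega]
    · simp
    · obtain ⟨t, rfl⟩ : ∃ t, c = a + 1 + t := ⟨c - (a + 1), by omega⟩
      simp [show a + 1 + t - a = t + 1 by omega, show a ≠ a + 1 + t by omega]
      omega

theorem ballot_rowReadingWord_highestTab {L : List ℕ} (hL : L.Pairwise (fun x y => y ≤ x))
    {a i : ℕ} (hi : a ≤ i) : Ballot i (rowReadingWord (highestTab L a)) := by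
  induction L generalizing a with
  | nil => exact ballot_nil i
  | cons l L ih =>
    rw [List.pairwise_cons] at hL
    rw [highestTab_cons, rowReadingWord_cons]
    rcases hi.eq_or_lt with rfl | hi
    · refine ballot_append_iff.mpr
        ⟨fun s hs => ?_, ballot_of_count_succ_eq_zero (by simp [List.count_replicate])⟩
      have hs := hs.sublist.count_le (a + 1)
      have hl : L.getD 0 0 ≤ l := by
        cases L with
        | nil => simp
        | cons l' L => simpa using hL.1 l' List.mem_cons_self
      simp only [count_rowReadingWord_highestTab, le_refl, if_true, Nat.sub_self] at hs
      simp [List.count_replicate]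
      omega
    · rw [ballot_append_iff_of_count_eq_zero (by simp [List.count_replicate]; omega)
        (by simp [List.count_replicate]; omega)]
      exact ih hL.2 hi

def RowBelow (R S : List ℕ) : Prop :=
  S.length ≤ R.length ∧ ∀ j < S.length, R.getD j 0 < S.getD j 0

theorem isSSYT_iff {T : List (List ℕ)} :
    IsSSYT T ↔ (∀ R ∈ T, R ≠ []) ∧ (∀ R ∈ T, R.IsChain (· ≤ ·)) ∧ T.IsChain RowBelow :=
  Iff.rfl

theorem isSSYT_nil : IsSSYT [] :=
  ⟨by simp, by simp, List.isChain_nil⟩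

theorem isSSYT_cons {R : List ℕ} {T : List (List ℕ)} :
    IsSSYT (R :: T) ↔
      R ≠ [] ∧ R.Pairwise (· ≤ ·) ∧ (∀ S ∈ T.head?, RowBelow R S) ∧ IsSSYT T := by
  simp only [isSSYT_iff, List.mem_cons, forall_eq_or_imp, List.isChain_cons,
    List.isChain_iff_pairwise]
  tauto

theorem IsSSYT.lt_of_mem_tail {R : List ℕ} {T : List (List ℕ)} (h : IsSSYT (R :: T)) :
    ∀ S ∈ T, ∀ y ∈ S, R.getD 0 0 < y := by
  induction T generalizing R with
  | nil => simp
  | cons S T ih =>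
    obtain ⟨-, -, hRS, hST⟩ := isSSYT_cons.mp h
    obtain ⟨hSne, hSsort, -, -⟩ := isSSYT_cons.mp hST
    have hRS0 : R.getD 0 0 < S.getD 0 0 := (hRS S rfl).2 0 (List.length_pos_of_ne_nil hSne)
    intro S' hS' y hy
    rcases List.mem_cons.mp hS' with rfl | hS'
    · obtain ⟨s, S, rfl⟩ := List.exists_cons_of_ne_nil hSne
      rcases List.mem_cons.mp hy with rfl | hy
      · simpa using hRS0
      · simpa using hRS0.trans_le ((List.pairwise_cons.mp hSsort).1 y hy)
    · exact hRS0.trans (ih hST S' hS' y hy)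

theorem IsSSYT.eq_highestTab {T : List (List ℕ)} (hT : IsSSYT T) {a : ℕ}
    (hmin : ∀ R ∈ T, ∀ x ∈ R, a ≤ x) (hball : ∀ i, a ≤ i → Ballot i (rowReadingWord T)) :
    T = highestTab (shape T) a := by
  induction T generalizing a with
  | nil => rfl
  | cons R T ih =>
    obtain ⟨hRne, hRsort, -, hT'⟩ := isSSYT_cons.mp hT
    rw [rowReadingWord_cons] at hball
    -- a letter `x > a` of the first row would start a suffix violating `Ballot (x - 1)`
    have hRa : ∀ x ∈ R, x = a := by
      intro x hx
      obtain ⟨A, B, rfl⟩ := List.append_of_mem hx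
      have hB := (List.pairwise_cons.mp (List.pairwise_append.mp hRsort).2.1).1
      have hax := hmin _ List.mem_cons_self x hx
      by_contra hne
      obtain ⟨i, rfl⟩ : ∃ i, x = i + 1 := ⟨x - 1, by omega⟩
      exact not_ballot_cons_of_le hB
        ((hball i (by omega)).of_suffix ⟨rowReadingWord T ++ A, by simp⟩)
    have hR : R = List.replicate R.length a := List.eq_replicate_of_mem hRa
    have hR0 : R.getD 0 0 = a := by
      obtain ⟨r, R', rfl⟩ := List.exists_cons_of_ne_nil hRne
      simpa using hRa r List.mem_cons_self
    have hRcount : ∀ i, a < i → R.count i = 0 := fun i hi =>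
      List.count_eq_zero.mpr fun h => by
        have := hRa i h
        omega
    have hTa := ih hT' (fun S hS x hx => hR0 ▸ hT.lt_of_mem_tail S hS x hx) fun i hi =>
      (ballot_append_iff_of_count_eq_zero (hRcount i (by omega)) (hRcount (i + 1) (by omega))).mp
        (hball i (by omega))
    calc R :: T = List.replicate R.length a :: highestTab (shape T) (a + 1) := by
          rw [← hR, ← hTa]
      _ = highestTab (shape (R :: T)) a := by simp [shape, highestTab_cons]

/-! ### Row insertion -/

def bumpIdx (R : List ℕ) (x : ℕ) : ℕ := R.findIdx fun y => decide (x < y)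

theorem insertRow_eq (R : List ℕ) (x : ℕ) :
    insertRow R x = (R.take (bumpIdx R x) ++ x :: R.drop (bumpIdx R x + 1), R[bumpIdx R x]?) := by
  unfold insertRow bumpIdx
  rcases h : R.findIdx? (fun y => decide (x < y)) with _ | k
  · simp [List.findIdx_eq_length.mpr (List.findIdx?_eq_none_iff.mp h)]
  · obtain ⟨hk, rfl⟩ := List.findIdx?_eq_some_iff_findIdx_eq.mp h
    simp [List.set_eq_take_append_cons_drop, hk]

theorem bumpIdx_le_length (R : List ℕ) (x : ℕ) : bumpIdx R x ≤ R.length :=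
  List.findIdx_le_length

theorem getD_le_of_lt_bumpIdx {R : List ℕ} {x j : ℕ} (hj : j < bumpIdx R x) :
    R.getD j 0 ≤ x := by
  have hjR := hj.trans_le (bumpIdx_le_length R x)
  rw [List.getD_eq_getElem _ _ hjR]
  simpa using List.not_of_lt_findIdx hj

theorem lt_getD_bumpIdx {R : List ℕ} {x : ℕ} (hk : bumpIdx R x < R.length) :
    x < R.getD (bumpIdx R x) 0 := by
  rw [List.getD_eq_getElem _ _ hk]
  exact of_decide_eq_true (List.findIdx_getElem (w := hk))

theorem length_insertRow_fst (R : List ℕ) (x : ℕ) :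
    (insertRow R x).1.length = max R.length (bumpIdx R x + 1) := by
  have := bumpIdx_le_length R x
  simp only [insertRow_eq, List.length_append, List.length_take, List.length_cons,
    List.length_drop]
  omega

theorem getD_insertRow_fst (R : List ℕ) (x j : ℕ) :
    (insertRow R x).1.getD j 0 = if j = bumpIdx R x then x else R.getD j 0 := by
  have := bumpIdx_le_length R x
  simp only [insertRow_eq, List.getD_eq_getElem?_getD, List.getElem?_append, List.getElem?_take,
    List.getElem?_cons, List.getElem?_drop, List.length_take]
  split_ifs <;> first | rfl | (congr 2; omega)

theorem pairwise_le_iff_getD {L : List ℕ} :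
    L.Pairwise (· ≤ ·) ↔ ∀ j j', j < j' → j' < L.length → L.getD j 0 ≤ L.getD j' 0 := by
  rw [List.pairwise_iff_getElem]
  refine ⟨fun h j j' hjj' hj' => ?_, fun h j j' hj hj' hjj' => ?_⟩
  · rw [List.getD_eq_getElem _ _ (hjj'.trans hj'), List.getD_eq_getElem _ _ hj']
    exact h j j' _ _ hjj'
  · have := h j j' hjj' hj'
    rwa [List.getD_eq_getElem _ _ hj, List.getD_eq_getElem _ _ hj'] at this

theorem insertRow_fst_pairwise {R : List ℕ} (hR : R.Pairwise (· ≤ ·)) (x : ℕ) :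
    (insertRow R x).1.Pairwise (· ≤ ·) := by
  rw [pairwise_le_iff_getD] at hR ⊢
  intro j j' hjj' hj'
  have hk := bumpIdx_le_length R x
  rw [length_insertRow_fst] at hj'
  rw [getD_insertRow_fst, getD_insertRow_fst]
  split_ifs with h h'
  · omega
  · have hx := lt_getD_bumpIdx (R := R) (x := x) (by omega)
    have := hR (bumpIdx R x) j' (by omega) (by omega)
    omega
  · exact getD_le_of_lt_bumpIdx (by omega)
  · exact hR j j' hjj' (by omega)

theorem rowBelow_nil (R : List ℕ) : RowBelow R [] := by
  simp [RowBelow]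

theorem RowBelow.insertRow_of_le {R S : List ℕ} {x : ℕ} (h : RowBelow R S)
    (hk : R.length ≤ bumpIdx R x) : RowBelow (insertRow R x).1 S := by
  refine ⟨by rw [length_insertRow_fst]; exact h.1.trans (le_max_left _ _), fun j hj => ?_⟩
  rw [getD_insertRow_fst, if_neg (by have := h.1; omega)]
  exact h.2 j hj

theorem RowBelow.insertRow_bump {R S : List ℕ} {x : ℕ} (h : RowBelow R S)
    (hk : bumpIdx R x < R.length) :
    RowBelow (insertRow R x).1 (insertRow S (R.getD (bumpIdx R x) 0)).1 := by
  have hxy : x < R.getD (bumpIdx R x) 0 := lt_getD_bumpIdx hk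
  have hpS := bumpIdx_le_length S (R.getD (bumpIdx R x) 0)
  -- the bumped letter lands in the next row weakly left of the position it was bumped from
  have hpk : bumpIdx S (R.getD (bumpIdx R x) 0) ≤ bumpIdx R x := by
    by_contra hkp
    have h1 := getD_le_of_lt_bumpIdx (j := bumpIdx R x) (not_le.mp hkp)
    have h2 := h.2 (bumpIdx R x) (by omega)
    omega
  refine ⟨by rw [length_insertRow_fst, length_insertRow_fst]; have := h.1; omega, fun j hj => ?_⟩
  rw [length_insertRow_fst] at hj
  rw [getD_insertRow_fst, getD_insertRow_fst]
  split_ifs with hjk hjp hjp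
  · omega
  · subst hjk
    have := h.2 (bumpIdx R x) (by omega)
    omega
  · have := getD_le_of_lt_bumpIdx (R := R) (x := x) (j := j) (by omega)
    omega
  · exact h.2 j (by omega)

theorem insertTab_cons_of_le {R : List ℕ} {x : ℕ} (hk : R.length ≤ bumpIdx R x)
    (T : List (List ℕ)) : insertTab (R :: T) x = (insertRow R x).1 :: T := by
  have h : (insertRow R x).2 = none := by simp [insertRow_eq, hk]
  rcases hI : insertRow R x with ⟨R', _ | y⟩ <;> simp_all [insertTab]

theorem insertTab_cons_of_lt {R : List ℕ} {x : ℕ} (hk : bumpIdx R x < R.length)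
    (T : List (List ℕ)) :
    insertTab (R :: T) x = (insertRow R x).1 :: insertTab T (R.getD (bumpIdx R x) 0) := by
  have h : (insertRow R x).2 = some (R.getD (bumpIdx R x) 0) := by
    rw [insertRow_eq, List.getD_eq_getElem _ _ hk, List.getElem?_eq_getElem hk]
  rcases hI : insertRow R x with ⟨R', _ | y⟩ <;> simp_all [insertTab]

theorem head?_insertTab (T : List (List ℕ)) (y : ℕ) :
    (insertTab T y).head? = some (insertRow (T.headD []) y).1 := by
  cases T with
  | nil => simp [insertTab, insertRow]
  | cons S T => rcases hI : insertRow S y with ⟨S', _ | z⟩ <;> simp [insertTab, hI]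

theorem IsSSYT.insertTab {T : List (List ℕ)} (hT : IsSSYT T) (x : ℕ) :
    IsSSYT (insertTab T x) := by
  induction T generalizing x with
  | nil => exact isSSYT_cons.mpr ⟨by simp, by simp, by simp, isSSYT_nil⟩
  | cons R T ih =>
    obtain ⟨-, hRsort, hRT, hT⟩ := isSSYT_cons.mp hT
    have hne : (insertRow R x).1 ≠ [] := List.ne_nil_of_length_pos (by simp [length_insertRow_fst])
    have hsort := insertRow_fst_pairwise hRsort x
    rcases lt_or_ge (bumpIdx R x) R.length with hk | hk
    · rw [insertTab_cons_of_lt hk]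
      have hRS : RowBelow R (T.headD []) := by
        cases T with
        | nil => exact rowBelow_nil R
        | cons S T => exact hRT S rfl
      refine isSSYT_cons.mpr ⟨hne, hsort, ?_, ih hT _⟩
      simpa [head?_insertTab] using hRS.insertRow_bump hk
    · rw [insertTab_cons_of_le hk]
      exact isSSYT_cons.mpr ⟨hne, hsort, fun S hS => (hRT S hS).insertRow_of_le hk, hT⟩

theorem knuthEquiv_cons_append_singleton {x y : ℕ} (hxy : x < y) {Q : List ℕ}
    (hQ : Q.Pairwise (· ≤ ·)) (hyQ : ∀ q ∈ Q, y ≤ q) :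
    KnuthEquiv (y :: (Q ++ [x])) (y :: x :: Q) := by
  induction Q generalizing y with
  | nil => exact KnuthEquiv.refl _
  | cons q Q ih =>
    rw [List.pairwise_cons] at hQ
    have hyq := hyQ q List.mem_cons_self
    have h := (ih (hxy.trans_le hyq) hQ.2 hQ.1).append_append [y] []
    simp only [List.singleton_append, List.append_nil] at h
    exact h.trans (KnuthStep.yzx [] Q x y q hxy hyq).knuthEquiv

theorem knuthEquiv_append_cons_cons {P : List ℕ} (hP : P.Pairwise (· ≤ ·)) {x y : ℕ}
    (hPx : ∀ p ∈ P, p ≤ x) (hxy : x < y) (Q : List ℕ) :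
    KnuthEquiv (P ++ y :: x :: Q) (y :: (P ++ x :: Q)) := by
  induction P using List.reverseRecOn generalizing x Q with
  | nil => exact KnuthEquiv.refl _
  | append_singleton P p ih =>
    obtain ⟨hP, -, hPp⟩ := List.pairwise_append.mp hP
    have hpx := hPx p (by simp)
    have h := ih hP (fun a ha => hPp a ha p (List.mem_singleton_self p)) (hpx.trans_lt hxy) (x :: Q)
    simp only [List.append_assoc, List.cons_append]
    exact (KnuthStep.zxy P Q p x y hpx hxy).knuthEquiv.symm.trans h

theorem knuthEquiv_append_singleton_insertRow {R : List ℕ} (hR : R.Pairwise (· ≤ ·)) {x : ℕ}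
    (hk : bumpIdx R x < R.length) :
    KnuthEquiv (R ++ [x]) (R.getD (bumpIdx R x) 0 :: (insertRow R x).1) := by
  have hsplit : R = R.take (bumpIdx R x) ++ R.getD (bumpIdx R x) 0 :: R.drop (bumpIdx R x + 1) := by
    rw [List.getD_eq_getElem _ _ hk, List.getElem_cons_drop, List.take_append_drop]
  have hPx : ∀ p ∈ R.take (bumpIdx R x), p ≤ x := by
    intro p hp
    obtain ⟨j, hj, rfl⟩ := List.mem_take_iff_getElem.mp hp
    have := getD_le_of_lt_bumpIdx (R := R) (x := x) (hj.trans_le (min_le_left _ _))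
    rwa [List.getD_eq_getElem _ _ (hj.trans_le (min_le_right _ _))] at this
  have hxy := lt_getD_bumpIdx hk
  rw [hsplit, List.pairwise_append, List.pairwise_cons] at hR
  have h1 := (knuthEquiv_cons_append_singleton hxy hR.2.1.2 hR.2.1.1).append_append
    (R.take (bumpIdx R x)) []
  have h2 := knuthEquiv_append_cons_cons hR.1 hPx hxy (R.drop (bumpIdx R x + 1))
  rw [insertRow_eq]
  conv_lhs => rw [hsplit]
  simp only [List.append_nil, List.append_assoc, List.cons_append] at h1 ⊢
  exact h1.trans h2

theorem knuthEquiv_insertTab {T : List (List ℕ)} (hT : ∀ R ∈ T, R.Pairwise (· ≤ ·)) (x : ℕ) :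
    KnuthEquiv (rowReadingWord T ++ [x]) (rowReadingWord (insertTab T x)) := by
  induction T generalizing x with
  | nil => exact KnuthEquiv.refl _
  | cons R T ih =>
    have hR := hT R List.mem_cons_self
    rcases lt_or_ge (bumpIdx R x) R.length with hk | hk
    · rw [insertTab_cons_of_lt hk, rowReadingWord_cons, rowReadingWord_cons]
      have h1 := (knuthEquiv_append_singleton_insertRow hR hk).append_append (rowReadingWord T) []
      have h2 := (ih (fun S hS => hT S (List.mem_cons_of_mem R hS))
        (R.getD (bumpIdx R x) 0)).append_append [] (insertRow R x).1
      simp only [List.append_nil, List.nil_append, List.append_assoc, List.cons_append] at h1 h2 ⊢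
      exact h1.trans h2
    · have hR' : (insertRow R x).1 = R ++ [x] := by
        simp [insertRow_eq, List.take_of_length_le hk,
          List.drop_of_length_le (hk.trans (Nat.le_succ _))]
      rw [insertTab_cons_of_le hk, rowReadingWord_cons, rowReadingWord_cons, hR', List.append_assoc]
      exact KnuthEquiv.refl _

theorem tabOf_append_singleton (w : List ℕ) (x : ℕ) :
    tabOf (w ++ [x]) = insertTab (tabOf w) x := by
  simp [tabOf]

theorem isSSYT_tabOf (w : List ℕ) : IsSSYT (tabOf w) := by
  induction w using List.reverseRecOn with
  | nil => exact isSSYT_nil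
  | append_singleton w x ih => rw [tabOf_append_singleton]; exact ih.insertTab x

theorem knuthEquiv_tabOf (w : List ℕ) : KnuthEquiv w (rowReadingWord (tabOf w)) := by
  induction w using List.reverseRecOn with
  | nil => exact KnuthEquiv.refl _
  | append_singleton w x ih =>
    rw [tabOf_append_singleton]
    have hrows : ∀ R ∈ tabOf w, R.Pairwise (· ≤ ·) := fun R hR =>
      List.isChain_iff_pairwise.mp ((isSSYT_tabOf w).2.1 R hR)
    simpa using (ih.append_append [] [x]).trans (knuthEquiv_insertTab hrows x)

theorem eq_of_getD_eq_of_pos {L₁ L₂ : List ℕ} (h : ∀ t, L₁.getD t 0 = L₂.getD t 0)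
    (h₁ : ∀ x ∈ L₁, 0 < x) (h₂ : ∀ x ∈ L₂, 0 < x) : L₁ = L₂ := by
  induction L₁ generalizing L₂ with
  | nil =>
    cases L₂ with
    | nil => rfl
    | cons y L₂ =>
      have h0 := h 0
      have hy := h₂ y List.mem_cons_self
      simp at h0
      omega
  | cons x L₁ ih =>
    cases L₂ with
    | nil =>
      have h0 := h 0
      have hx := h₁ x List.mem_cons_self
      simp at h0
      omega
    | cons y L₂ =>
      have hxy : x = y := by simpa using h 0
      rw [hxy, ih (fun t => by simpa using h (t + 1))
        (fun z hz => h₁ z (List.mem_cons_of_mem x hz))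
        (fun z hz => h₂ z (List.mem_cons_of_mem y hz))]

theorem tabOf_eq_highestTab_iff {a : ℕ} {w : List ℕ} (hw : ∀ x ∈ w, a ≤ x) {L : List ℕ}
    (hL : L.Pairwise (fun x y => y ≤ x)) (hL0 : ∀ x ∈ L, 0 < x) :
    tabOf w = highestTab L a ↔
      (∀ i, a ≤ i → Ballot i w) ∧ ∀ t, w.count (a + t) = L.getD t 0 := by
  have hK := knuthEquiv_tabOf w
  constructor
  · intro h
    rw [h] at hK
    exact ⟨fun i hi => hK.ballot_iff.mpr (ballot_rowReadingWord_highestTab hL hi),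
      fun t => by simp [hK.perm.count_eq, count_rowReadingWord_highestTab]⟩
  · rintro ⟨hball, hcount⟩
    have hT := isSSYT_tabOf w
    have hmin : ∀ R ∈ tabOf w, ∀ x ∈ R, a ≤ x := fun R hR x hx =>
      hw x (hK.perm.symm.subset (by simpa [rowReadingWord] using ⟨R, hR, hx⟩))
    have heq := hT.eq_highestTab hmin fun i hi => hK.ballot_iff.mp (hball i hi)
    suffices hshape : shape (tabOf w) = L by rwa [hshape] at heq
    refine eq_of_getD_eq_of_pos (fun t => ?_) ?_ hL0
    · have := count_rowReadingWord_highestTab (shape (tabOf w)) a (a + t)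
      rw [← heq, ← hK.perm.count_eq, hcount] at this
      simpa using this.symm
    · simpa [shape, List.length_pos_iff] using hT.1

/-! ### Filtrations -/

theorem pairwise_map_range_of_succ_le {f : ℕ → ℕ} {n : ℕ} (hf : ∀ t, t + 1 < n → f (t + 1) ≤ f t) :
    ((List.range n).map f).Pairwise (fun x y => y ≤ x) :=
  List.isChain_iff_pairwise.mp
    ((List.isChain_map f).mpr ((List.isChain_range _ n).mpr fun t ht => hf t (by omega)))

theorem getD_filter_pos {L : List ℕ} (hL : L.Pairwise (fun x y => y ≤ x)) (t : ℕ) :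
    (L.filter fun x => decide (0 < x)).getD t 0 = L.getD t 0 := by
  induction L generalizing t with
  | nil => rfl
  | cons x L ih =>
    rw [List.pairwise_cons] at hL
    rcases Nat.eq_zero_or_pos x with rfl | hx
    · have hnil : L.filter (fun x => decide (0 < x)) = [] :=
        List.filter_eq_nil_iff.mpr fun y hy => by simpa using hL.1 y hy
      cases t with
      | zero => simp [hnil]
      | succ t => simpa [hnil] using ih hL.2 t
    · cases t with
      | zero => simp [hx]
      | succ t => simpa [hx] using ih hL.2 t

section BlockShape

variable {lam : ℕ → ℕ} {lo size : ℕ}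

theorem pairwise_blockShape (hdec : ∀ i, lo < i → i < lo + size → lam (i + 1) ≤ lam i) :
    (blockShape lam lo size).Pairwise (fun x y => y ≤ x) :=
  (pairwise_map_range_of_succ_le fun t ht => hdec (lo + t + 1) (by omega) (by omega)).sublist
    List.filter_sublist

theorem getD_blockShape (hdec : ∀ i, lo < i → i < lo + size → lam (i + 1) ≤ lam i) (t : ℕ) :
    (blockShape lam lo size).getD t 0 = if t < size then lam (lo + t + 1) else 0 := by
  rw [blockShape, getD_filter_pos
    (pairwise_map_range_of_succ_le fun t ht => hdec (lo + t + 1) (by omega) (by omega))]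
  split_ifs with ht
  · simp [ht]
  · simp [show size ≤ t by omega]

end BlockShape

theorem tabOf_blockFilter_eq_highestTab_iff {lo hi : ℕ} {lam : ℕ → ℕ}
    (hdec : ∀ i, lo < i → i < hi → lam (i + 1) ≤ lam i) (w : List ℕ) :
    tabOf (blockFilter lo hi w) = highestTab (blockShape lam lo (hi - lo)) (lo + 1) ↔
      (∀ i, lo < i → i < hi → Ballot i w) ∧ ∀ i, lo < i → i ≤ hi → w.count i = lam i := by
  have hdec' : ∀ i, lo < i → i < lo + (hi - lo) → lam (i + 1) ≤ lam i := fun i h1 h2 =>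
    hdec i h1 (by omega)
  have hmem : ∀ x ∈ blockFilter lo hi w, lo + 1 ≤ x ∧ x ≤ hi := by simp [blockFilter]
  have hcount : ∀ c, lo < c → c ≤ hi → (blockFilter lo hi w).count c = w.count c := fun c h1 h2 =>
    List.count_filter (by simp; omega)
  have hcount0 : ∀ c, hi < c → (blockFilter lo hi w).count c = 0 := fun c hc =>
    List.count_eq_zero.mpr fun h => by have := (hmem c h).2; omega
  rw [tabOf_eq_highestTab_iff (fun x hx => (hmem x hx).1) (pairwise_blockShape hdec')
    (fun x hx => by simpa [blockShape] using (List.mem_filter.mp hx).2)]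
  refine and_congr ⟨fun h i h1 h2 => ?_, fun h i hai => ?_⟩ ⟨fun h i h1 h2 => ?_, fun h t => ?_⟩
  · exact (ballot_filter_iff (by simp; omega) (by simp; omega) w).mp (h i (by omega))
  · rcases lt_or_ge i hi with h2 | h2
    · exact (ballot_filter_iff (by simp; omega) (by simp; omega) w).mpr (h i (by omega) h2)
    · exact ballot_of_count_succ_eq_zero (hcount0 _ (by omega))
  · have := h (i - (lo + 1))
    rwa [getD_blockShape hdec', if_pos (by omega), show lo + 1 + (i - (lo + 1)) = i by omega,
      show lo + (i - (lo + 1)) + 1 = i by omega, hcount i h1 h2] at this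
  · rw [getD_blockShape hdec']
    split_ifs with ht
    · rw [hcount _ (by omega) (by omega), h _ (by omega) (by omega)]
      congr 1
      omega
    · exact hcount0 _ (by omega)

namespace IsFiltration

variable {m r : ℕ} {ι : Fin (r + 1) → ℕ}

theorem succ_le (hι : IsFiltration m ι) (k : Fin r) : ι k.succ ≤ m :=
  hι.2.2 ▸ hι.1.monotone (Fin.le_last _)

theorem exists_block (hι : IsFiltration m ι) {i : ℕ} (h1 : 1 ≤ i) (h2 : i ≤ m) :
    ∃ k : Fin r, ι k.castSucc < i ∧ i ≤ ι k.succ := by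
  by_contra! h
  have hlt : ∀ q, ι q < i := Fin.induction (by rw [hι.2.1]; omega) h
  have := hlt (Fin.last r)
  rw [hι.2.2] at this
  omega

theorem not_mem_range (hι : IsFiltration m ι) {k : Fin r} {i : ℕ} (h1 : ι k.castSucc < i)
    (h2 : i < ι k.succ) : i ∉ Set.range ι := by
  rintro ⟨q, rfl⟩
  have h1 := Fin.lt_def.mp (hι.1.lt_iff_lt.mp h1)
  have h2 := Fin.lt_def.mp (hι.1.lt_iff_lt.mp h2)
  simp only [Fin.val_castSucc, Fin.val_succ] at h1 h2
  omega

end IsFiltration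

theorem tabOf_filterWord_eq_highestFromVec_iff {m r : ℕ} {ι : Fin (r + 1) → ℕ}
    (hι : IsFiltration m ι) {lam : ℕ → ℕ}
    (hlam : ∀ i, 1 ≤ i → i < m → i ∉ Set.range ι → lam (i + 1) ≤ lam i) (w : List ℕ) :
    (∀ k, tabOf (filterWord ι w k) = highestFromVec ι lam k) ↔
      (∀ i, 1 ≤ i → i < m → i ∉ Set.range ι → Ballot i w) ∧
        ∀ i, 1 ≤ i → i ≤ m → w.count i = lam i := by
  have hblock (k : Fin r) :=
    tabOf_blockFilter_eq_highestTab_iff (lo := ι k.castSucc) (hi := ι k.succ) (w := w)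
      fun i h1 h2 => hlam i (by omega) (by have := hι.succ_le k; omega) (hι.not_mem_range h1 h2)
  simp only [filterWord, highestFromVec, hblock]
  constructor
  · intro h
    refine ⟨fun i h1 h2 h3 => ?_, fun i h1 h2 => ?_⟩
    · obtain ⟨k, hk1, hk2⟩ := hι.exists_block h1 h2.le
      exact (h k).1 i hk1 (lt_of_le_of_ne hk2 fun he => h3 ⟨_, he.symm⟩)
    · obtain ⟨k, hk1, hk2⟩ := hι.exists_block h1 h2
      exact (h k).2 i hk1 hk2
  · rintro ⟨hb, hc⟩ k
    have := hι.succ_le k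
    exact ⟨fun i h1 h2 => hb i (by omega) (by omega) (hι.not_mem_range h1 h2),
      fun i h1 h2 => hc i (by omega) (by omega)⟩

/-! ### Row words of matrices -/

theorem count_flatMap_range' (f : ℕ → List ℕ) (c a k : ℕ) :
    ((List.range' a k).flatMap f).count c = ∑ l ∈ Finset.Ico a (a + k), (f l).count c := by
  induction k generalizing a with
  | zero => simp
  | succ k ih =>
    rw [List.range'_succ, List.flatMap_cons, List.count_append, ih,
      Finset.sum_eq_sum_Ico_succ_bot (a := a) (b := a + (k + 1)) (by omega),
      show a + 1 + k = a + (k + 1) by omega]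

theorem ballot_flatMap_range'_iff {f : ℕ → List ℕ} (hf : ∀ j, (f j).Pairwise (· ≤ ·))
    (i a k : ℕ) :
    Ballot i ((List.range' a k).flatMap f) ↔
      ∀ j, a ≤ j → j < a + k →
        ∑ l ∈ Finset.Ico j (a + k), (f l).count (i + 1) ≤
          ∑ l ∈ Finset.Ico (j + 1) (a + k), (f l).count i := by
  induction k generalizing a with
  | zero =>
    simp only [List.range'_zero, List.flatMap_nil, ballot_nil, true_iff]
    omega
  | succ k ih =>
    rw [List.range'_succ, List.flatMap_cons, ballot_sorted_append_iff (hf a), ih,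
      count_flatMap_range', count_flatMap_range', show a + 1 + k = a + (k + 1) by omega,
      ← Finset.sum_eq_sum_Ico_succ_bot (a := a) (b := a + (k + 1)) (by omega)
        fun l => (f l).count (i + 1)]
    constructor
    · rintro ⟨h0, h⟩ j h1 h2
      rcases h1.eq_or_lt with rfl | h1
      · exact h0
      · exact h j h1 h2
    · intro h
      exact ⟨h a le_rfl (by omega), fun j h1 h2 => h j (by omega) h2⟩

section MatrixWords

variable {m n : ℕ} (M : Matrix (Fin m) (Fin n) ℕ)

theorem ent_add_one_add_one (i : Fin m) (j : Fin n) : ent M (i + 1) (j + 1) = M i j := by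
  simp [ent]

theorem ent_of_lt (i : ℕ) {j : ℕ} (hj : n < j) : ent M i j = 0 := by
  simp [ent]
  omega

theorem ent_transpose (i j : ℕ) : ent M.transpose i j = ent M j i := by
  unfold ent
  by_cases h : 1 ≤ i ∧ i ≤ n ∧ 1 ≤ j ∧ j ≤ m
  · rw [dif_pos h, dif_pos (by omega)]
    rfl
  · rw [dif_neg h, dif_neg (by omega)]

theorem colWord_eq_rowWord_transpose : colWord M = rowWord M.transpose := rfl

def columnLetters (j : ℕ) : List ℕ :=
  (List.range' 1 m).flatMap fun i => List.replicate (ent M i j) i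

theorem count_columnLetters (c j : ℕ) : (columnLetters M j).count c = ent M c j := by
  rw [columnLetters, count_flatMap_range']
  simp only [List.count_replicate, beq_iff_eq, Finset.sum_ite_eq', Finset.mem_Ico]
  split_ifs with h
  · rfl
  · unfold ent
    rw [dif_neg (by omega)]

theorem pairwise_columnLetters (j : ℕ) : (columnLetters M j).Pairwise (· ≤ ·) := by
  refine List.pairwise_flatMap.mpr ⟨fun i _ => List.pairwise_replicate.mpr (Or.inr le_rfl), ?_⟩
  refine (List.pairwise_lt_range' (s := 1) (n := m)).imp fun {a b} hab x hx y hy => ?_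
  rw [List.eq_of_mem_replicate hx, List.eq_of_mem_replicate hy]
  exact hab.le

theorem rowWord_eq_flatMap : rowWord M = (List.range' 1 n).flatMap (columnLetters M) := by
  have key (k : ℕ) : List.range' 1 k = (List.finRange k).map fun a : Fin k => (a : ℕ) + 1 := by
    exact List.ext_getElem (by simp) fun t _ _ => by simp [Nat.add_comm]
  simp only [rowWord, columnLetters, key, List.flatMap_map, ent_add_one_add_one]

theorem count_rowWord (c : ℕ) : (rowWord M).count c = ∑ j ∈ Finset.Icc 1 n, ent M c j := by
  rw [rowWord_eq_flatMap, count_flatMap_range', Nat.add_comm, Finset.Ico_add_one_right_eq_Icc]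
  simp only [count_columnLetters]

theorem ballot_rowWord_iff (i : ℕ) :
    Ballot i (rowWord M) ↔ ∀ j, 1 ≤ j → j ≤ n →
      ∑ k ∈ Finset.Icc j n, ent M (i + 1) k ≤ ∑ k ∈ Finset.Icc j n, ent M i (k + 1) := by
  have hshift {j : ℕ} (hj : j ≤ n) :
      ∑ k ∈ Finset.Icc j n, ent M i (k + 1) = ∑ k ∈ Finset.Ico (j + 1) (1 + n), ent M i k := by
    rw [← Finset.Ico_add_one_right_eq_Icc, Finset.sum_Ico_add', Nat.add_comm 1 n,
      Finset.sum_Ico_succ_top (by omega), ent_of_lt M i (Nat.lt_add_one n), add_zero]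
  rw [rowWord_eq_flatMap, ballot_flatMap_range'_iff (pairwise_columnLetters M)]
  simp only [count_columnLetters, Nat.add_comm 1 n, Finset.Ico_add_one_right_eq_Icc]
  refine forall_congr' fun j => ⟨fun h h1 h2 => ?_, fun h h1 h2 => ?_⟩
  · rw [hshift h2, Nat.add_comm 1 n, Finset.Ico_add_one_right_eq_Icc]
    exact h h1 (by omega)
  · have := h h1 (by omega)
    rwa [hshift (by omega), Nat.add_comm 1 n, Finset.Ico_add_one_right_eq_Icc] at this

end MatrixWords

/-- The number of matrices mapped by `filterRSK_{I|J}` to the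
highest-weight tableau-tuple `(T_λ | T_μ)` equals the number of lattice points of the
polytope `P_{λ|μ}` cut out by the highest-weight conditions (i), (ii), the shape conditions
(iii), (iv), and nonnegativity. -/
theorem highest_weight_polytope_count (m n : ℕ) {r s : ℕ}
    (ι : Fin (r + 1) → ℕ) (κ : Fin (s + 1) → ℕ)
    (hι : IsFiltration m ι) (hκ : IsFiltration n κ)
    (lam : ℕ → ℕ) (mu : ℕ → ℕ)
    (hlam : ∀ i, 1 ≤ i → i < m → i ∉ Set.range ι → lam (i + 1) ≤ lam i)
    (hmu : ∀ j, 1 ≤ j → j < n → j ∉ Set.range κ → mu (j + 1) ≤ mu j) :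
    Set.ncard {M : Matrix (Fin m) (Fin n) ℕ |
        filterRSKt ι κ M = (highestFromVec ι lam, highestFromVec κ mu)} =
    Set.ncard {M : Matrix (Fin m) (Fin n) ℕ |
        (∀ i, 1 ≤ i → i < m → i ∉ Set.range ι → ∀ j, 1 ≤ j → j ≤ n →
          ∑ k ∈ Finset.Icc j n, ent M (i + 1) k ≤ ∑ k ∈ Finset.Icc j n, ent M i (k + 1)) ∧
        (∀ j, 1 ≤ j → j < n → j ∉ Set.range κ → ∀ i, 1 ≤ i → i ≤ m →
          ∑ k ∈ Finset.Icc i m, ent M k (j + 1) ≤ ∑ k ∈ Finset.Icc i m, ent M (k + 1) j) ∧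
        (∀ i, 1 ≤ i → i ≤ m → ∑ j ∈ Finset.Icc 1 n, ent M i j = lam i) ∧
        (∀ j, 1 ≤ j → j ≤ n → ∑ i ∈ Finset.Icc 1 m, ent M i j = mu j)} := by
  congr 1
  ext M
  simp only [Set.mem_ofPred_eq, filterRSKt, Prod.mk.injEq, funext_iff,
    tabOf_filterWord_eq_highestFromVec_iff hι hlam, colWord_eq_rowWord_transpose,
    tabOf_filterWord_eq_highestFromVec_iff hκ hmu, ballot_rowWord_iff, count_rowWord,
    ent_transpose]
  tauto

end FilteredRSK
end
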